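/- arXiv:2212.02713 — 6 statements merged into one kernel-verified Lean document; each statement's English description precedes it below -/
import Mathlib

section
/- Let Ω ⊆ ℂ be open, let u : Ω → ℝ be harmonic on Ω, let Δ = {w ∈ ℂ : |w| < 1} be the open unit disc, let p : Δ → Ω be holomorphic, and let f : Δ → ℂ be holomorphic with |f(w)| = exp(u(p(w))) for all w ∈ Δ. Let γ̃ : [0,1] → Δ be a piecewise continuously differentiable curve and set γ = p ∘ γ̃. Then f(γ̃(1)) = f(γ̃(0)) · exp( u(γ(1)) − u(γ(0)) + i·∫₀¹ ( ∂u/∂x(γ(t))·(Im γ)′(t) − ∂u/∂y(γ(t))·(Re γ)′(t) ) dt ). -/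
open Complex Set

/-- Partial derivative in the direction of the real axis. -/
noncomputable def pdx (u : ℂ → ℝ) (z : ℂ) : ℝ := fderiv ℝ u z 1

/-- Partial derivative in the direction of the imaginary axis. -/
noncomputable def pdy (u : ℂ → ℝ) (z : ℂ) : ℝ := fderiv ℝ u z Complex.I

/-- `u` is harmonic on `U`: twice continuously differentiable with vanishing Laplacian. -/
def IsHarmonicOn (u : ℂ → ℝ) (U : Set ℂ) : Prop :=
  ContDiffOn ℝ 2 u U ∧ ∀ z ∈ U, pdx (pdx u) z + pdy (pdy u) z = 0

/-- A curve `γ : [0,1] → ℂ` is piecewise continuously differentiable. -/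
def PiecewiseC1 (γ : ℝ → ℂ) : Prop :=
  ContinuousOn γ (Set.Icc 0 1) ∧
  ∃ (N : ℕ) (t : ℕ → ℝ), t 0 = 0 ∧ t N = 1 ∧ (∀ j < N, t j < t (j + 1)) ∧
    ∀ j < N, ContDiffOn ℝ 1 γ (Set.Icc (t j) (t (j + 1)))

/-- The line integral `∫_γ d̃u` of the conjugate differential
`d̃u = (∂u/∂x) dy − (∂u/∂y) dx` along `γ`. -/
noncomputable def conjInt (u : ℂ → ℝ) (γ : ℝ → ℂ) : ℝ :=
  ∫ t in (0:ℝ)..1,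
    pdx u (γ t) * deriv (fun s => (γ s).im) t - pdy u (γ t) * deriv (fun s => (γ s).re) t

open MeasureTheory intervalIntegral
lemma Ldecomp (L : ℂ →L[ℝ] ℝ) (z : ℂ) : L z = L 1 * z.re + L Complex.I * z.im := by
  have hz : z = z.re • (1:ℂ) + z.im • Complex.I := by
    apply Complex.ext <;> simp
  calc L z = L (z.re • (1:ℂ) + z.im • Complex.I) := by rw [← hz]
    _ = z.re • L 1 + z.im • L Complex.I := by rw [map_add, _root_.map_smul, _root_.map_smul]
    _ = L 1 * z.re + L Complex.I * z.im := by simp [smul_eq_mul]; ring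

lemma keyalg (a b : ℝ) (q v : ℂ) :
    (((a * q.re + b * q.im : ℝ) : ℂ)
        - Complex.I * ((a * (Complex.I * q).re + b * (Complex.I * q).im : ℝ) : ℂ)) * v
      = ((a * (q * v).re + b * (q * v).im : ℝ) : ℂ)
        + Complex.I * ((a * (q * v).im - b * (q * v).re : ℝ) : ℂ) := by
  apply Complex.ext <;> simp [Complex.mul_re, Complex.mul_im] <;> ring

lemma stepA {f : ℂ → ℂ} {U : ℂ → ℝ} {s : Set ℂ} (hs : IsOpen s)
    (hf : DifferentiableOn ℂ f s)
    (habs : ∀ w ∈ s, ‖f w‖ = Real.exp (U w)) {w₀ : ℂ} (hw₀ : w₀ ∈ s) :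
    DifferentiableAt ℝ U w₀ ∧
      HasDerivAt f (f w₀ * ((fderiv ℝ U w₀ 1 : ℝ) - Complex.I * (fderiv ℝ U w₀ Complex.I : ℝ))) w₀ := by
  have hfw₀ : f w₀ ≠ 0 := by
    intro h
    have h2 := habs w₀ hw₀
    rw [h] at h2
    simp only [norm_zero] at h2
    exact (Real.exp_pos _).ne h2
  have hexp0 : (Real.exp (U w₀) : ℂ) ≠ 0 := by
    exact_mod_cast Real.exp_ne_zero _
  set c : ℂ := f w₀ * (Real.exp (U w₀) : ℂ)⁻¹ with hc
  have hcne : c ≠ 0 := mul_ne_zero hfw₀ (inv_ne_zero hexp0)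
  have hcabs : ‖c‖ = 1 := by
    rw [hc, norm_mul, norm_inv, Complex.norm_real, Real.norm_eq_abs, abs_of_pos (Real.exp_pos _),
      habs w₀ hw₀, mul_inv_cancel₀ (Real.exp_ne_zero _)]
  have habs' : ∀ w ∈ s, ‖f w * c⁻¹‖ = Real.exp (U w) := by
    intro w hw
    rw [norm_mul, norm_inv, hcabs, habs w hw]
    simp
  have hfdiff : HasDerivAt f (deriv f w₀) w₀ :=
    (hf.differentiableAt (hs.mem_nhds hw₀)).hasDerivAt
  have hval : f w₀ * c⁻¹ = (Real.exp (U w₀) : ℂ) := by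
    rw [hc]; field_simp
  have hslit : f w₀ * c⁻¹ ∈ Complex.slitPlane := by
    rw [hval]; exact Complex.ofReal_mem_slitPlane.2 (Real.exp_pos _)
  have hg : HasDerivAt (fun w => Complex.log (f w * c⁻¹)) (deriv f w₀ * c⁻¹ / (f w₀ * c⁻¹)) w₀ :=
    (hfdiff.mul_const c⁻¹).clog hslit
  set g : ℂ → ℂ := fun w => Complex.log (f w * c⁻¹) with hgdef
  set g' : ℂ := deriv f w₀ * c⁻¹ / (f w₀ * c⁻¹) with hg'def
  have hre : ∀ w ∈ s, (g w).re = U w := by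
    intro w hw
    simp only [hgdef, Complex.log_re, habs' w hw, Real.log_exp]
  set M : ℂ →L[ℝ] ℂ := ((1 : ℂ →L[ℂ] ℂ).smulRight g').restrictScalars ℝ with hM
  have hgF : HasFDerivAt g M w₀ := hg.hasFDerivAt.restrictScalars ℝ
  have hcomp : HasFDerivAt (fun w => (g w).re) (Complex.reCLM.comp M) w₀ :=
    (Complex.reCLM.hasFDerivAt).comp w₀ hgF
  have heq : U =ᶠ[nhds w₀] fun w => (g w).re :=
    Filter.eventuallyEq_of_mem (hs.mem_nhds hw₀) (fun w hw => (hre w hw).symm)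
  have hU : HasFDerivAt U (Complex.reCLM.comp M) w₀ := hcomp.congr_of_eventuallyEq heq
  refine ⟨hU.differentiableAt, ?_⟩
  have h1 : fderiv ℝ U w₀ 1 = g'.re := by
    rw [hU.fderiv]
    simp [hM]
  have h2 : fderiv ℝ U w₀ Complex.I = -g'.im := by
    rw [hU.fderiv]
    simp [hM]
  have h3 : ((fderiv ℝ U w₀ 1 : ℝ) : ℂ) - Complex.I * (fderiv ℝ U w₀ Complex.I : ℝ) = g' := by
    rw [h1, h2]
    apply Complex.ext <;> simp
  rw [h3]
  have h4 : f w₀ * g' = deriv f w₀ := by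
    rw [hg'def]
    field_simp
  rw [h4]
  exact hfdiff
section
variable {Ω : Set ℂ} {u : ℂ → ℝ} {p f : ℂ → ℂ} {γt : ℝ → ℂ} {a b : ℝ}

lemma piece (hΩ : IsOpen Ω) (hu2 : ContDiffOn ℝ 2 u Ω)
    (hp : DifferentiableOn ℂ p (Metric.ball (0:ℂ) 1))
    (hmaps : Set.MapsTo p (Metric.ball (0:ℂ) 1) Ω)
    (hf : DifferentiableOn ℂ f (Metric.ball (0:ℂ) 1))
    (habs : ∀ w ∈ Metric.ball (0:ℂ) 1, ‖f w‖ = Real.exp (u (p w)))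
    (hab : a < b)
    (hγΔ : ∀ t ∈ Icc a b, γt t ∈ Metric.ball (0:ℂ) 1)
    (hC1 : ContDiffOn ℝ 1 γt (Icc a b)) :
    IntervalIntegrable (fun t => pdx u (p (γt t)) * deriv (fun s => (p (γt s)).im) t
        - pdy u (p (γt t)) * deriv (fun s => (p (γt s)).re) t) volume a b ∧
    f (γt b) = f (γt a) * Complex.exp (((u (p (γt b)) - u (p (γt a)) : ℝ) : ℂ) +
        Complex.I * ((∫ t in a..b, (pdx u (p (γt t)) * deriv (fun s => (p (γt s)).im) t
        - pdy u (p (γt t)) * deriv (fun s => (p (γt s)).re) t)) : ℝ)) := by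
  set Δ : Set ℂ := Metric.ball (0:ℂ) 1 with hΔ
  set φ : ℝ → ℝ := fun t => pdx u (p (γt t)) * deriv (fun s => (p (γt s)).im) t
        - pdy u (p (γt t)) * deriv (fun s => (p (γt s)).re) t with hφdef
  set g : ℝ → ℂ := derivWithin γt (Icc a b) with hgdef
  set ψ : ℝ → ℝ := fun t => pdx u (p (γt t)) * (deriv p (γt t) * g t).im
        - pdy u (p (γt t)) * (deriv p (γt t) * g t).re with hψdef
  have hγmem : ∀ t ∈ Icc a b, p (γt t) ∈ Ω := fun t ht => hmaps (hγΔ t ht)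
  -- continuity facts
  have hgcont : ContinuousOn g (Icc a b) :=
    hC1.continuousOn_derivWithin (uniqueDiffOn_Icc hab) le_rfl
  have hdpc : ContinuousOn (deriv p) Δ :=
    ((hp.analyticOnNhd Metric.isOpen_ball).deriv).continuousOn
  have hfdu : ContinuousOn (fderiv ℝ u) Ω :=
    hu2.continuousOn_fderiv_of_isOpen hΩ (by norm_num)
  have hγcont : ContinuousOn γt (Icc a b) := hC1.continuousOn
  have hγcontP : ContinuousOn (fun t => p (γt t)) (Icc a b) :=
    hp.continuousOn.comp hγcont hγΔ
  have hpdxc : ContinuousOn (fun t => pdx u (p (γt t))) (Icc a b) := by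
    have : ContinuousOn (fun z => fderiv ℝ u z 1) Ω := hfdu.clm_apply continuousOn_const
    exact this.comp hγcontP hγmem
  have hpdyc : ContinuousOn (fun t => pdy u (p (γt t))) (Icc a b) := by
    have : ContinuousOn (fun z => fderiv ℝ u z Complex.I) Ω := hfdu.clm_apply continuousOn_const
    exact this.comp hγcontP hγmem
  have hqg : ContinuousOn (fun t => deriv p (γt t) * g t) (Icc a b) :=
    (hdpc.comp hγcont hγΔ).mul hgcont
  have hψcont : ContinuousOn ψ (Icc a b) :=
    (hpdxc.mul (Complex.continuous_im.comp_continuousOn hqg)).sub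
      (hpdyc.mul (Complex.continuous_re.comp_continuousOn hqg))
  -- pointwise facts at interior points
  have hmain : ∀ x ∈ Ioo a b,
      HasDerivAt (fun t => f (γt t))
        (f (γt x) * (((fderiv ℝ u (p (γt x)) (deriv p (γt x) * g x) : ℝ) : ℂ)
          + Complex.I * (ψ x : ℝ))) x ∧
      HasDerivAt (fun t => u (p (γt t))) (fderiv ℝ u (p (γt x)) (deriv p (γt x) * g x)) x ∧
      φ x = ψ x := by
    intro x hx
    have hxIcc : x ∈ Icc a b := Ioo_subset_Icc_self hx
    have hxI : Icc a b ∈ nhds x := Icc_mem_nhds hx.1 hx.2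
    have hwΔ : γt x ∈ Δ := hγΔ x hxIcc
    have hzΩ : p (γt x) ∈ Ω := hγmem x hxIcc
    -- derivative of γt
    have hdx : DifferentiableAt ℝ γt x :=
      ((hC1.differentiableOn one_ne_zero) x hxIcc).differentiableAt hxI
    have hgx : HasDerivAt γt (g x) x := by
      rw [hgdef, derivWithin_of_mem_nhds hxI]
      exact hdx.hasDerivAt
    -- derivative of p at γt x
    have hpd : DifferentiableAt ℂ p (γt x) := hp.differentiableAt (Metric.isOpen_ball.mem_nhds hwΔ)
    set q : ℂ := deriv p (γt x) with hqdef
    have hγx : HasDerivAt (fun t => p (γt t)) (q * g x) x := by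
      have h := (hpd.hasDerivAt.hasFDerivAt.restrictScalars ℝ).comp_hasDerivAt x hgx
      exact h.congr_deriv (by simp [hqdef, mul_comm])
    -- derivative of u ∘ γ
    have hud : DifferentiableAt ℝ u (p (γt x)) :=
      ((hu2.differentiableOn (by norm_num)) (p (γt x)) hzΩ).differentiableAt (hΩ.mem_nhds hzΩ)
    have hc' : HasDerivAt (fun t => u (p (γt t))) (fderiv ℝ u (p (γt x)) (q * g x)) x :=
      hud.hasFDerivAt.comp_hasDerivAt x hγx
    -- deriv of re/im parts
    have him : deriv (fun s => (p (γt s)).im) x = (q * g x).im :=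
      (Complex.imCLM.hasFDerivAt.comp_hasDerivAt x hγx).deriv
    have hre : deriv (fun s => (p (γt s)).re) x = (q * g x).re :=
      (Complex.reCLM.hasFDerivAt.comp_hasDerivAt x hγx).deriv
    have hφψ : φ x = ψ x := by
      simp only [hφdef, hψdef, him, hre, hqdef]
    -- step A and chain rule
    obtain ⟨hUdiff, hfd⟩ := stepA (U := u ∘ p) Metric.isOpen_ball hf habs hwΔ
    have hpdR : DifferentiableAt ℝ p (γt x) := hpd.restrictScalars ℝ
    have hchain : fderiv ℝ (u ∘ p) (γt x) = (fderiv ℝ u (p (γt x))).comp (fderiv ℝ p (γt x)) :=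
      fderiv_comp (γt x) hud hpdR
    have hfp : fderiv ℝ p (γt x) = (fderiv ℂ p (γt x)).restrictScalars ℝ :=
      hpd.fderiv_restrictScalars ℝ
    have hfp1 : fderiv ℝ p (γt x) 1 = q := by
      rw [hfp]
      simp [hqdef, ← hpd.hasDerivAt.deriv]
    have hfpI : fderiv ℝ p (γt x) Complex.I = Complex.I * q := by
      rw [hfp]
      have : fderiv ℂ p (γt x) Complex.I = Complex.I • fderiv ℂ p (γt x) 1 := by
        rw [← (fderiv ℂ p (γt x)).map_smul]
        norm_num
      simp only [ContinuousLinearMap.coe_restrictScalars', this]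
      have h1 : fderiv ℂ p (γt x) 1 = q := by
        rw [hqdef, ← hpd.hasDerivAt.deriv]
        rfl
      rw [h1, smul_eq_mul]
    have hU1 : fderiv ℝ (u ∘ p) (γt x) 1 = fderiv ℝ u (p (γt x)) q := by
      rw [hchain]; simp [hfp1]
    have hUI : fderiv ℝ (u ∘ p) (γt x) Complex.I
        = fderiv ℝ u (p (γt x)) (Complex.I * q) := by
      rw [hchain]; simp [hfpI]
    -- derivative of f ∘ γt
    have hfγ : HasDerivAt (fun t => f (γt t))
        ((f (γt x) * (((fderiv ℝ (u ∘ p) (γt x) 1 : ℝ) : ℂ)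
          - Complex.I * ((fderiv ℝ (u ∘ p) (γt x) Complex.I : ℝ) : ℂ))) * g x) x := by
      have h := (hfd.hasFDerivAt.restrictScalars ℝ).comp_hasDerivAt x hgx
      exact h.congr_deriv (by simp [mul_comm])
    refine ⟨?_, hc', hφψ⟩
    convert hfγ using 1
    rw [hU1, hUI]
    set A := pdx u (p (γt x)) with hA
    set B := pdy u (p (γt x)) with hB
    have hL1 : fderiv ℝ u (p (γt x)) q = A * q.re + B * q.im := by
      rw [Ldecomp (fderiv ℝ u (p (γt x))) q]; rfl
    have hLI : fderiv ℝ u (p (γt x)) (Complex.I * q)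
        = A * (Complex.I * q).re + B * (Complex.I * q).im := by
      rw [Ldecomp (fderiv ℝ u (p (γt x))) (Complex.I * q)]; rfl
    have hLqg : fderiv ℝ u (p (γt x)) (q * g x) = A * (q * g x).re + B * (q * g x).im := by
      rw [Ldecomp (fderiv ℝ u (p (γt x))) (q * g x)]; rfl
    rw [hL1, hLI, hLqg, mul_assoc, keyalg A B q (g x)]

  -- primitive of ψ
  have hψint : ∀ x ∈ Icc a b, IntervalIntegrable ψ volume a x := by
    intro x hx
    apply ContinuousOn.intervalIntegrable
    apply hψcont.mono
    rw [uIcc_of_le hx.1]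
    exact Icc_subset_Icc le_rfl hx.2
  set B : ℝ → ℝ := fun t => ∫ s in a..t, ψ s with hBdef
  have hBderiv : ∀ x ∈ Ioo a b, HasDerivAt B (ψ x) x := by
    intro x hx
    have hxIcc : x ∈ Icc a b := Ioo_subset_Icc_self hx
    have hxI : Icc a b ∈ nhds x := Icc_mem_nhds hx.1 hx.2
    have hca : ContinuousAt ψ x := (hψcont x hxIcc).continuousAt hxI
    exact intervalIntegral.integral_hasDerivAt_right (hψint x hxIcc)
      ⟨Icc a b, hxI, hψcont.aestronglyMeasurable measurableSet_Icc⟩ hca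
  have hBcont : ContinuousOn B (Icc a b) := by
    have hint : IntegrableOn ψ (uIcc a b) volume := by
      rw [uIcc_of_le hab.le]
      exact hψcont.integrableOn_Icc
    have h := intervalIntegral.continuousOn_primitive_interval hint
    rwa [uIcc_of_le hab.le] at h
  set G : ℝ → ℂ := fun t =>
    f (γt t) * Complex.exp (-(((u (p (γt t)) : ℝ) : ℂ) + Complex.I * ((B t : ℝ) : ℂ))) with hGdef
  have hGcont : ContinuousOn G (Icc a b) := by
    apply ContinuousOn.mul (hf.continuousOn.comp hγcont hγΔ)
    apply Complex.continuous_exp.comp_continuousOn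
    apply ContinuousOn.neg
    apply ContinuousOn.add
    · exact Complex.continuous_ofReal.comp_continuousOn (hu2.continuousOn.comp hγcontP hγmem)
    · exact continuousOn_const.mul (Complex.continuous_ofReal.comp_continuousOn hBcont)
  have hG0 : ∀ x ∈ Ioo a b, HasDerivAt G 0 x := by
    intro x hx
    obtain ⟨hf', hc', _⟩ := hmain x hx
    have hB' := hBderiv x hx
    have hin : HasDerivAt (fun t => -(((u (p (γt t)) : ℝ) : ℂ) + Complex.I * ((B t : ℝ) : ℂ)))
        (-(((fderiv ℝ u (p (γt x)) (deriv p (γt x) * g x) : ℝ) : ℂ)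
          + Complex.I * ((ψ x : ℝ) : ℂ))) x := by
      apply HasDerivAt.neg
      exact (hc'.ofReal_comp).add ((hB'.ofReal_comp).const_mul Complex.I)
    have hexp := hin.cexp
    have hmul := hf'.mul hexp
    exact hmul.congr_deriv (by ring)
  have hGba : G b = G a := by
    have key : ∀ T : ℂ →L[ℝ] ℝ, T (G b) = T (G a) := by
      intro T
      obtain ⟨c, hc, h0⟩ := exists_hasDerivAt_eq_slope (fun t => T (G t)) (fun _ => 0) hab
        (T.continuous.comp_continuousOn hGcont)
        (fun x hx => by have h := T.hasFDerivAt.comp_hasDerivAt x (hG0 x hx); rw [map_zero] at h; exact h)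
      rw [eq_comm, div_eq_zero_iff] at h0
      rcases h0 with h0 | h0
      · linarith [sub_eq_zero.mp h0]
      · exact absurd h0 (sub_ne_zero.2 hab.ne')
    have hrectangle := key Complex.reCLM
    have him := key Complex.imCLM
    apply Complex.ext
    · simpa using hrectangle
    · simpa using him
  have hBa : B a = 0 := intervalIntegral.integral_same
  have hfb : f (γt b) = f (γt a) *
      Complex.exp (((u (p (γt b)) - u (p (γt a)) : ℝ) : ℂ) + Complex.I * ((B b : ℝ) : ℂ)) := by
    have hGb : f (γt b) * Complex.exp (-(((u (p (γt b)) : ℝ) : ℂ) + Complex.I * ((B b : ℝ) : ℂ)))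
        = f (γt a) * Complex.exp (-(((u (p (γt a)) : ℝ) : ℂ) + Complex.I * ((B a : ℝ) : ℂ))) :=
      hGba
    calc f (γt b)
        = f (γt b) * Complex.exp (-(((u (p (γt b)) : ℝ) : ℂ) + Complex.I * ((B b : ℝ) : ℂ)))
          * Complex.exp ((((u (p (γt b)) : ℝ) : ℂ) + Complex.I * ((B b : ℝ) : ℂ))) := by
          rw [mul_assoc, ← Complex.exp_add, neg_add_cancel, Complex.exp_zero, mul_one]
      _ = f (γt a) * Complex.exp (-(((u (p (γt a)) : ℝ) : ℂ) + Complex.I * ((B a : ℝ) : ℂ)))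
          * Complex.exp ((((u (p (γt b)) : ℝ) : ℂ) + Complex.I * ((B b : ℝ) : ℂ))) := by
          rw [hGb]
      _ = f (γt a) *
          Complex.exp (((u (p (γt b)) - u (p (γt a)) : ℝ) : ℂ) + Complex.I * ((B b : ℝ) : ℂ)) := by
          rw [mul_assoc, ← Complex.exp_add]
          congr 2
          rw [hBa]
          push_cast
          ring
  have hglobal : ∀ᵐ x : ℝ ∂volume, x ≠ b := by
    refine (MeasureTheory.ae_iff).2 ?_
    have : {x : ℝ | ¬ x ≠ b} = {b} := by ext x; simp
    rw [this]
    exact Real.volume_singleton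
  have hae2 : ∀ᵐ x : ℝ ∂volume, x ∈ Set.uIoc a b → φ x = ψ x := by
    filter_upwards [hglobal] with x hxb hxmem
    rw [uIoc_of_le hab.le] at hxmem
    exact (hmain x ⟨hxmem.1, lt_of_le_of_ne hxmem.2 hxb⟩).2.2
  have hψib : IntervalIntegrable ψ volume a b := hψint b ⟨hab.le, le_rfl⟩
  have hφint : IntervalIntegrable φ volume a b :=
    hψib.congr_ae (((ae_restrict_iff' measurableSet_uIoc).2 hae2).mono fun x h => h.symm)
  refine ⟨hφint, ?_⟩
  have hie : (∫ t in a..b, φ t) = B b := intervalIntegral.integral_congr_ae hae2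
  rw [hie]
  exact hfb


end

/-- Let `u` be harmonic on an open set `Ω`, `p : Δ → Ω` holomorphic on the unit disc `Δ`,
and `f` holomorphic on `Δ` with `|f| = exp (u ∘ p)`. For a piecewise `C¹` curve `γ̃` in `Δ`
with `γ := p ∘ γ̃`, one has
`f(γ̃(1)) = f(γ̃(0)) · exp( u(γ(1)) − u(γ(0)) + i ∫_γ d̃u )`. -/
theorem multiplicative_function_along_curve
    (Ω : Set ℂ) (hΩ : IsOpen Ω) (u : ℂ → ℝ) (hu : IsHarmonicOn u Ω)
    (p : ℂ → ℂ) (hp : DifferentiableOn ℂ p (Metric.ball (0:ℂ) 1))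
    (hmaps : Set.MapsTo p (Metric.ball (0:ℂ) 1) Ω)
    (f : ℂ → ℂ) (hf : DifferentiableOn ℂ f (Metric.ball (0:ℂ) 1))
    (habs : ∀ w ∈ Metric.ball (0:ℂ) 1, ‖f w‖ = Real.exp (u (p w)))
    (γt : ℝ → ℂ) (hγt : PiecewiseC1 γt)
    (hγtΔ : ∀ t ∈ Set.Icc (0:ℝ) 1, γt t ∈ Metric.ball (0:ℂ) 1) :
    f (γt 1) = f (γt 0) *
      Complex.exp ((u (p (γt 1)) - u (p (γt 0)) : ℝ) +
        Complex.I * (conjInt u (p ∘ γt) : ℝ)) := by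
  obtain ⟨hγcont01, N, t, ht0, htN, htlt, htC1⟩ := hγt
  set φ : ℝ → ℝ := fun s => pdx u (p (γt s)) * deriv (fun r => (p (γt r)).im) s
        - pdy u (p (γt s)) * deriv (fun r => (p (γt r)).re) s with hφdef
  -- monotonicity of partition points
  have hmono : ∀ k, k ≤ N → ∀ j, j ≤ k → t j ≤ t k := by
    intro k
    induction k with
    | zero => intro _ j hj; interval_cases j; exact le_rfl
    | succ n ih =>
      intro hn j hj
      rcases Nat.lt_or_ge j (n+1) with h | h
      · exact le_trans (ih (by omega) j (by omega)) (htlt n (by omega)).le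
      · have : j = n + 1 := by omega
        rw [this]
  have hrange : ∀ j, j ≤ N → t j ∈ Icc (0:ℝ) 1 := by
    intro j hj
    constructor
    · rw [← ht0]; exact hmono j hj 0 (by omega)
    · rw [← htN]; exact hmono N le_rfl j hj
  -- induction over pieces
  have hP : ∀ j, j ≤ N → IntervalIntegrable φ volume (t 0) (t j) ∧
      f (γt (t j)) = f (γt (t 0)) *
        Complex.exp (((u (p (γt (t j))) - u (p (γt (t 0))) : ℝ) : ℂ) +
          Complex.I * ((∫ s in (t 0)..(t j), φ s : ℝ) : ℂ)) := by
    intro j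
    induction j with
    | zero =>
      intro _
      refine ⟨IntervalIntegrable.refl, ?_⟩
      simp
    | succ n ih =>
      intro hn
      obtain ⟨hint, heq⟩ := ih (by omega)
      have hsub : Icc (t n) (t (n+1)) ⊆ Icc (0:ℝ) 1 := by
        intro x hx
        exact ⟨le_trans (hrange n (by omega)).1 hx.1, le_trans hx.2 (hrange (n+1) (by omega)).2⟩
      obtain ⟨hint2, heq2⟩ := piece hΩ hu.1 hp hmaps hf habs (htlt n (by omega))
        (fun x hx => hγtΔ x (hsub hx)) (htC1 n (by omega))
      refine ⟨hint.trans hint2, ?_⟩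
      have hadd : (∫ s in (t 0)..(t n), φ s) + (∫ s in (t n)..(t (n+1)), φ s)
          = ∫ s in (t 0)..(t (n+1)), φ s :=
        intervalIntegral.integral_add_adjacent_intervals hint hint2
      rw [heq2, heq, mul_assoc, ← Complex.exp_add]
      congr 2
      rw [← hadd]
      push_cast
      ring
  obtain ⟨_, hfinal⟩ := hP N le_rfl
  rw [ht0, htN] at hfinal
  have hconj : conjInt u (p ∘ γt) = ∫ s in (0:ℝ)..1, φ s := by
    simp only [conjInt, Function.comp_apply, hφdef]
  rw [hconj]
  exact hfinal
end

section
/- Let Ω ⊆ ℂ be open, let u : Ω → ℝ be harmonic on Ω, let Δ = {w ∈ ℂ : |w| < 1} be the open unit disc, let p : Δ → Ω be holomorphic, and let f : Δ → ℂ be holomorphic with |f(w)| = exp(u(p(w))) for all w ∈ Δ. Let γ̃ : [0,1] → Δ be a piecewise continuously differentiable curve such that γ := p ∘ γ̃ is a closed curve, i.e. γ(0) = γ(1). Then f(γ̃(1)) = f(γ̃(0)) · exp( i·∫₀¹ ( ∂u/∂x(γ(t))·(Im γ)′(t) − ∂u/∂y(γ(t))·(Re γ)′(t) ) dt ). In particular,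 the multiplicative character value by which f transforms under the deck transformation taking γ̃(0) to γ̃(1) equals exp( i ∫_γ d̃u ). -/
open Complex Set MeasureTheory

lemma keyFDeriv (u : ℂ → ℝ) {p f : ℂ → ℂ}
    (hf : DifferentiableOn ℂ f (Metric.ball (0:ℂ) 1))
    (habs : ∀ w ∈ Metric.ball (0:ℂ) 1, ‖f w‖ = Real.exp (u (p w)))
    {w : ℂ} (hw : w ∈ Metric.ball (0:ℂ) 1) :
    HasFDerivAt (fun z => u (p z))
      (Complex.reCLM.comp
        (((1 : ℂ →L[ℂ] ℂ).smulRight (deriv f w / f w)).restrictScalars ℝ)) w := by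
  have hfw : f w ≠ 0 := by
    intro h
    have := habs w hw
    rw [h] at this
    simp at this
    exact (Real.exp_pos _).ne' this.symm
  have hfd : HasDerivAt f (deriv f w) w :=
    (hf.differentiableAt (Metric.isOpen_ball.mem_nhds hw)).hasDerivAt
  have hdiv : HasDerivAt (fun z => f z / f w) (deriv f w / f w) w := hfd.div_const _
  have hval : f w / f w = 1 := div_self hfw
  have hg : HasDerivAt (fun z => Complex.log (f z / f w)) (deriv f w / f w) w := by
    have := hdiv.clog (show f w / f w ∈ Complex.slitPlane by
      rw [hval]; exact Or.inl (by norm_num))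
    rwa [hval, div_one] at this
  have heq : ∀ z ∈ Metric.ball (0:ℂ) 1,
      (Complex.log (f z / f w)).re + u (p w) = u (p z) := by
    intro z hz
    rw [Complex.log_re, norm_div, habs z hz, habs w hw, ← Real.exp_sub, Real.log_exp]
    ring
  have hgF : HasFDerivAt (fun z => (Complex.log (f z / f w)).re + u (p w))
      (Complex.reCLM.comp
        (((1 : ℂ →L[ℂ] ℂ).smulRight (deriv f w / f w)).restrictScalars ℝ)) w :=
    (Complex.reCLM.hasFDerivAt.comp w (hg.hasFDerivAt.restrictScalars ℝ)).add_const _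
  refine hgF.congr_of_eventuallyEq ?_
  filter_upwards [Metric.isOpen_ball.mem_nhds hw] with z hz
  exact (heq z hz).symm

/-- Interior facts at a point where the curve has a genuine derivative. -/
lemma interiorFacts {Ω : Set ℂ} (hΩ : IsOpen Ω) {u : ℂ → ℝ} (hu : ContDiffOn ℝ 2 u Ω)
    {p f : ℂ → ℂ} (hp : DifferentiableOn ℂ p (Metric.ball (0:ℂ) 1))
    (hmaps : Set.MapsTo p (Metric.ball (0:ℂ) 1) Ω)
    (hf : DifferentiableOn ℂ f (Metric.ball (0:ℂ) 1))
    (habs : ∀ w ∈ Metric.ball (0:ℂ) 1, ‖f w‖ = Real.exp (u (p w)))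
    {γt : ℝ → ℂ} {x : ℝ} {e : ℂ} (hx : HasDerivAt γt e x)
    (hw : γt x ∈ Metric.ball (0:ℂ) 1) :
    HasDerivAt (fun s => u (p (γt s))) ((deriv f (γt x) / f (γt x) * e).re) x ∧
    pdx u (p (γt x)) * deriv (fun s => (p (γt s)).im) x
      - pdy u (p (γt x)) * deriv (fun s => (p (γt s)).re) x
      = (deriv f (γt x) / f (γt x) * e).im := by
  set w := γt x with hwdef
  have hkey := keyFDeriv u hf habs hw
  constructor
  · have h1 := hkey.comp_hasDerivAt x hx
    have : (Complex.reCLM.comp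
        (((1 : ℂ →L[ℂ] ℂ).smulRight (deriv f w / f w)).restrictScalars ℝ)) e
        = (deriv f w / f w * e).re := by
      simp [mul_comm]
    rwa [this] at h1
  · have hpw : HasDerivAt p (deriv p w) w :=
      (hp.differentiableAt (Metric.isOpen_ball.mem_nhds hw)).hasDerivAt
    set q := deriv p w with hqdef
    have hγ : HasDerivAt (fun s => p (γt s)) (q * e) x := hpw.comp x hx
    have him : deriv (fun s => (p (γt s)).im) x = (q * e).im := by
      have := Complex.imCLM.hasFDerivAt.comp_hasDerivAt x hγ
      exact HasDerivAt.deriv this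
    have hre : deriv (fun s => (p (γt s)).re) x = (q * e).re := by
      have := Complex.reCLM.hasFDerivAt.comp_hasDerivAt x hγ
      exact HasDerivAt.deriv this
    have hud : DifferentiableAt ℝ u (p w) :=
      (hu.contDiffAt (hΩ.mem_nhds (hmaps hw))).differentiableAt (by norm_num)
    have hchain : HasFDerivAt (fun z => u (p z))
        ((fderiv ℝ u (p w)).comp
          (((1 : ℂ →L[ℂ] ℂ).smulRight q).restrictScalars ℝ)) w :=
      hud.hasFDerivAt.comp w (hpw.hasFDerivAt.restrictScalars ℝ)
    have huniq := hkey.unique hchain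
    have expand : ∀ z : ℂ, fderiv ℝ u (p w) z
        = z.re * pdx u (p w) + z.im * pdy u (p w) := by
      intro z
      have hz : z = z.re • (1:ℂ) + z.im • Complex.I := by
        simp [Complex.real_smul, Complex.re_add_im]
      conv_lhs => rw [hz]
      rw [map_add, (fderiv ℝ u (p w)).map_smul, (fderiv ℝ u (p w)).map_smul]
      simp [pdx, pdy, smul_eq_mul]
    have e1 := congrArg (fun (L : ℂ →L[ℝ] ℝ) => L 1) huniq
    have eI := congrArg (fun (L : ℂ →L[ℝ] ℝ) => L Complex.I) huniq
    simp only [ContinuousLinearMap.coe_comp', Function.comp_apply,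
      ContinuousLinearMap.coe_restrictScalars', ContinuousLinearMap.smulRight_apply,
      ContinuousLinearMap.one_apply, smul_eq_mul, one_mul, Complex.reCLM_apply] at e1 eI
    rw [expand] at e1 eI
    rw [him, hre]
    simp only [Complex.mul_re, Complex.mul_im, Complex.I_re, Complex.I_im] at e1 eI ⊢
    linear_combination (-e.im) * e1 + e.re * eI

lemma pieceLemma {Ω : Set ℂ} (hΩ : IsOpen Ω) {u : ℂ → ℝ} (hu : ContDiffOn ℝ 2 u Ω)
    {p f : ℂ → ℂ} (hp : DifferentiableOn ℂ p (Metric.ball (0:ℂ) 1))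
    (hmaps : Set.MapsTo p (Metric.ball (0:ℂ) 1) Ω)
    (hf : DifferentiableOn ℂ f (Metric.ball (0:ℂ) 1))
    (habs : ∀ w ∈ Metric.ball (0:ℂ) 1, ‖f w‖ = Real.exp (u (p w)))
    {γt : ℝ → ℂ} {a b : ℝ} (hab : a < b)
    (hC1 : ContDiffOn ℝ 1 γt (Icc a b))
    (hball : ∀ x ∈ Icc a b, γt x ∈ Metric.ball (0:ℂ) 1) :
    IntervalIntegrable (fun x => pdx u (p (γt x)) * deriv (fun s => (p (γt s)).im) x
      - pdy u (p (γt x)) * deriv (fun s => (p (γt s)).re) x) MeasureTheory.volume a b ∧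
    f (γt b) = f (γt a) * Complex.exp (((u (p (γt b)) - u (p (γt a)) : ℝ) : ℂ)
      + Complex.I * Complex.ofReal (∫ x in a..b, pdx u (p (γt x)) * deriv (fun s => (p (γt s)).im) x
          - pdy u (p (γt x)) * deriv (fun s => (p (γt s)).re) x)) := by
  set G : ℝ → ℝ := fun x => pdx u (p (γt x)) * deriv (fun s => (p (γt s)).im) x
      - pdy u (p (γt x)) * deriv (fun s => (p (γt s)).re) x with hGdef
  have hfne : ∀ z ∈ Metric.ball (0:ℂ) 1, f z ≠ 0 := by
    intro z hz h0
    have := habs z hz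
    rw [h0] at this
    simp at this
    exact (Real.exp_pos _).ne' this.symm
  set d : ℝ → ℂ := fun x => derivWithin γt (Icc a b) x with hddef
  have hdc : ContinuousOn d (Icc a b) :=
    hC1.continuousOn_derivWithin (uniqueDiffOn_Icc hab) le_rfl
  have hdd : ∀ x ∈ Icc a b, HasDerivWithinAt γt (d x) (Icc a b) x := fun x hx =>
    ((hC1.differentiableOn one_ne_zero) x hx).hasDerivWithinAt
  have hγcont : ContinuousOn γt (Icc a b) := hC1.continuousOn
  have hdf : ContinuousOn (deriv f) (Metric.ball (0:ℂ) 1) :=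
    ((hf.analyticOnNhd Metric.isOpen_ball).deriv).continuousOn
  set c : ℝ → ℂ := fun x => (deriv f (γt x) / f (γt x)) * d x with hcdef
  have hcc : ContinuousOn c (Icc a b) :=
    (((hdf.comp hγcont hball).div ((hf.continuousOn).comp hγcont hball)
      (fun x hx => hfne _ (hball x hx))).mul hdc)
  -- continuous extension of c to all of ℝ
  set C : ℝ → ℂ := fun x => (Set.Icc a b).restrict c (Set.projIcc a b hab.le x) with hCdef
  have hC : Continuous C := hcc.restrict.comp (continuous_projIcc)
  have hCc : ∀ x ∈ Icc a b, C x = c x := by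
    intro x hx
    simp [hCdef, Set.projIcc_of_mem hab.le hx]
    rfl
  set V : ℝ → ℂ := fun x => ∫ s in a..x, C s with hVdef
  have hV : ∀ x, HasDerivAt V (C x) x := fun x =>
    (hC.integral_hasStrictDerivAt a x).hasDerivAt
  have hVc : Continuous V := by
    apply continuous_iff_continuousAt.mpr
    exact fun x => (hV x).continuousAt
  have hVa : V a = 0 := intervalIntegral.integral_same
  set M : ℝ → ℂ := fun x => f (γt x) * Complex.exp (-V x) with hMdef
  have hMc : ContinuousOn M (Icc a b) :=
    ((hf.continuousOn).comp hγcont hball).mul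
      ((Complex.continuous_exp.comp hVc.neg).continuousOn)
  have hMd : ∀ x ∈ Ico a b, HasDerivWithinAt M 0 (Ici x) x := by
    intro x hx
    have hxI : x ∈ Icc a b := Ico_subset_Icc_self hx
    have hmem : Icc a b ∈ nhdsWithin x (Ici x) :=
      mem_nhdsWithin.mpr ⟨Iio b, isOpen_Iio, hx.2,
        fun y hy => ⟨hx.1.trans hy.2, hy.1.le⟩⟩
    have hγx : HasDerivWithinAt γt (d x) (Ici x) x :=
      (hdd x hxI).mono_of_mem_nhdsWithin hmem
    have hfx : HasDerivAt f (deriv f (γt x)) (γt x) :=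
      (hf.differentiableAt (Metric.isOpen_ball.mem_nhds (hball x hxI))).hasDerivAt
    have h1 : HasDerivWithinAt (fun s => f (γt s)) (deriv f (γt x) * d x) (Ici x) x :=
      hfx.comp_hasDerivWithinAt x hγx
    have h2 : HasDerivWithinAt (fun s => Complex.exp (-V s))
        (Complex.exp (-V x) * (-C x)) (Ici x) x := ((hV x).hasDerivWithinAt.neg).cexp
    have h3 := h1.mul h2
    have hz : deriv f (γt x) * d x * Complex.exp (-V x)
        + f (γt x) * (Complex.exp (-V x) * (-C x)) = 0 := by
      rw [hCc x hxI, hcdef]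
      have := hfne _ (hball x hxI)
      field_simp
      ring
    rwa [hz] at h3
  have hconst := constant_of_has_deriv_right_zero hMc hMd b (right_mem_Icc.mpr hab.le)
  have hfb : f (γt b) = f (γt a) * Complex.exp (V b) := by
    have : f (γt b) * Complex.exp (-V b) = f (γt a) := by
      rw [hMdef] at hconst
      simpa [hVa] using hconst
    calc f (γt b) = f (γt b) * Complex.exp (-V b) * Complex.exp (V b) := by
          rw [mul_assoc, ← Complex.exp_add]; simp
      _ = f (γt a) * Complex.exp (V b) := by rw [this]
  -- interior facts
  have hint : ∀ x ∈ Ioo a b,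
      HasDerivAt (fun s => u (p (γt s))) ((c x).re) x ∧ G x = (c x).im := by
    intro x hx
    have hdx : HasDerivAt γt (d x) x :=
      (hdd x (Ioo_subset_Icc_self hx)).hasDerivAt (Icc_mem_nhds hx.1 hx.2)
    exact interiorFacts hΩ hu hp hmaps hf habs hdx (hball x (Ioo_subset_Icc_self hx))
  have hcre : ContinuousOn (fun x => (c x).re) (Icc a b) :=
    Complex.continuous_re.comp_continuousOn hcc
  have hcim : ContinuousOn (fun x => (c x).im) (Icc a b) :=
    Complex.continuous_im.comp_continuousOn hcc
  have hre_int : IntervalIntegrable (fun x => (c x).re) MeasureTheory.volume a b := by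
    apply ContinuousOn.intervalIntegrable
    rwa [uIcc_of_le hab.le]
  have him_int : IntervalIntegrable (fun x => (c x).im) MeasureTheory.volume a b := by
    apply ContinuousOn.intervalIntegrable
    rwa [uIcc_of_le hab.le]
  have hφcont : ContinuousOn (fun s => u (p (γt s))) (Icc a b) :=
    (hu.continuousOn).comp ((hp.continuousOn).comp hγcont hball)
      (fun x hx => hmaps (hball x hx))
  have hre_eq : ∫ x in a..b, (c x).re = u (p (γt b)) - u (p (γt a)) :=
    intervalIntegral.integral_eq_sub_of_hasDeriv_right_of_le hab.le hφcont
      (fun x hx => ((hint x hx).1).hasDerivWithinAt) hre_int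
  -- a.e. equality of G with (c ·).im on the interval
  have hae : ∀ᵐ x ∂MeasureTheory.volume, x ∈ Set.uIoc a b → G x = (c x).im := by
    have hb_ae : ∀ᵐ x : ℝ ∂MeasureTheory.volume, x ≠ b := by
      rw [MeasureTheory.ae_iff]
      simpa using MeasureTheory.measure_singleton (b : ℝ)
    filter_upwards [hb_ae] with x hxb hmem
    rw [Set.uIoc_of_le hab.le] at hmem
    exact (hint x ⟨hmem.1, lt_of_le_of_ne hmem.2 hxb⟩).2
  have hG_int : IntervalIntegrable G MeasureTheory.volume a b := by
    apply him_int.congr_ae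
    have hae' : ∀ᵐ x ∂MeasureTheory.volume, x ∈ Set.uIoc a b → (c x).im = G x := by
      filter_upwards [hae] with x hx hmem
      exact (hx hmem).symm
    exact (MeasureTheory.ae_restrict_iff' measurableSet_uIoc).mpr hae'
  have hG_eq : ∫ x in a..b, G x = ∫ x in a..b, (c x).im :=
    intervalIntegral.integral_congr_ae hae
  -- split V b into real and imaginary parts
  have hsplit : V b = ((u (p (γt b)) - u (p (γt a)) : ℝ) : ℂ)
      + Complex.I * Complex.ofReal (∫ x in a..b, G x) := by
    have hVb : V b = ∫ x in a..b, c x := by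
      apply intervalIntegral.integral_congr
      intro x hx
      rw [uIcc_of_le hab.le] at hx
      exact hCc x hx
    have hof : IntervalIntegrable (fun x => ((c x).re : ℂ)) MeasureTheory.volume a b := by
      apply ContinuousOn.intervalIntegrable
      rw [uIcc_of_le hab.le]
      exact Complex.continuous_ofReal.comp_continuousOn hcre
    have hof2 : IntervalIntegrable (fun x => ((c x).im : ℂ) * Complex.I)
        MeasureTheory.volume a b := by
      apply ContinuousOn.intervalIntegrable
      rw [uIcc_of_le hab.le]
      exact (Complex.continuous_ofReal.comp_continuousOn hcim).mul continuousOn_const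
    have : ∫ x in a..b, c x
        = (∫ x in a..b, (((c x).re : ℂ) + ((c x).im : ℂ) * Complex.I)) := by
      congr 1
      ext x
      exact (Complex.re_add_im (c x)).symm
    rw [hVb, this, intervalIntegral.integral_add hof hof2,
      intervalIntegral.integral_mul_const, intervalIntegral.integral_ofReal,
      intervalIntegral.integral_ofReal, hre_eq, hG_eq]
    ring
  refine ⟨hG_int, ?_⟩
  rw [hfb, hsplit]

/-- Let `u` be harmonic on an open set `Ω`, `p : Δ → Ω` holomorphic on the unit disc `Δ`,
and `f` holomorphic on `Δ` with `|f| = exp (u ∘ p)`. For a piecewise `C¹` curve `γ̃` in `Δ`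
such that `γ := p ∘ γ̃` is closed, one has
`f(γ̃(1)) = f(γ̃(0)) · exp( i ∫_γ d̃u )`; this value `exp(i ∫_γ d̃u)` is the character value
by which `f` transforms under the corresponding deck transformation. -/
theorem multiplicative_function_character_along_closed_curve
    (Ω : Set ℂ) (hΩ : IsOpen Ω) (u : ℂ → ℝ) (hu : IsHarmonicOn u Ω)
    (p : ℂ → ℂ) (hp : DifferentiableOn ℂ p (Metric.ball (0:ℂ) 1))
    (hmaps : Set.MapsTo p (Metric.ball (0:ℂ) 1) Ω)
    (f : ℂ → ℂ) (hf : DifferentiableOn ℂ f (Metric.ball (0:ℂ) 1))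
    (habs : ∀ w ∈ Metric.ball (0:ℂ) 1, ‖f w‖ = Real.exp (u (p w)))
    (γt : ℝ → ℂ) (hγt : PiecewiseC1 γt)
    (hγtΔ : ∀ t ∈ Set.Icc (0:ℝ) 1, γt t ∈ Metric.ball (0:ℂ) 1)
    (hclosed : p (γt 0) = p (γt 1)) :
    f (γt 1) = f (γt 0) * Complex.exp (Complex.I * (conjInt u (p ∘ γt) : ℝ)) := by
  obtain ⟨hcont, N, t, ht0, htN, htlt, htC1⟩ := hγt
  set G : ℝ → ℝ := fun x => pdx u (p (γt x)) * deriv (fun s => (p (γt s)).im) x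
      - pdy u (p (γt x)) * deriv (fun s => (p (γt s)).re) x with hGdef
  have hmono : ∀ j, j ≤ N → ∀ i, i ≤ j → t i ≤ t j := by
    intro j
    induction j with
    | zero =>
      intro _ i hi
      rw [Nat.le_zero] at hi
      rw [hi]
    | succ m ih =>
      intro hj i hi
      rcases Nat.lt_or_ge i (m+1) with h | h
      · exact le_trans (ih (le_trans (Nat.le_succ m) hj) i (Nat.lt_succ_iff.mp h))
          (le_of_lt (htlt m (Nat.lt_of_succ_le hj)))
      · rw [le_antisymm hi h]
  have hsub : ∀ j, j ≤ N → t j ∈ Icc (0:ℝ) 1 := by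
    intro j hj
    constructor
    · rw [← ht0]; exact hmono j hj 0 (Nat.zero_le j)
    · rw [← htN]; exact hmono N le_rfl j hj
  have key : ∀ j, j ≤ N → IntervalIntegrable G MeasureTheory.volume (t 0) (t j) ∧
      f (γt (t j)) = f (γt (t 0)) * Complex.exp
        (((u (p (γt (t j))) - u (p (γt (t 0))) : ℝ) : ℂ)
          + Complex.I * Complex.ofReal (∫ x in (t 0)..(t j), G x)) := by
    intro j
    induction j with
    | zero =>
      intro _
      refine ⟨IntervalIntegrable.refl, ?_⟩
      simp
    | succ m ih =>
      intro hj
      have hmN : m < N := Nat.lt_of_succ_le hj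
      obtain ⟨ih1, ih2⟩ := ih (le_of_lt hmN)
      have hball : ∀ x ∈ Icc (t m) (t (m+1)), γt x ∈ Metric.ball (0:ℂ) 1 := by
        intro x hx
        refine hγtΔ x ⟨?_, ?_⟩
        · exact le_trans (hsub m (le_of_lt hmN)).1 hx.1
        · exact le_trans hx.2 (hsub (m+1) hj).2
      have piece := pieceLemma hΩ hu.1 hp hmaps hf habs (htlt m hmN) (htC1 m hmN) hball
      refine ⟨ih1.trans piece.1, ?_⟩
      rw [piece.2, ih2, mul_assoc, ← Complex.exp_add]
      congr 1
      rw [← intervalIntegral.integral_add_adjacent_intervals ih1 piece.1]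
      push_cast
      simp only [hGdef]
      ring
  obtain ⟨_, heq⟩ := key N le_rfl
  rw [ht0, htN] at heq
  have hφ : u (p (γt 1)) - u (p (γt 0)) = 0 := by rw [← hclosed, sub_self]
  have hc : conjInt u (p ∘ γt) = ∫ x in (0:ℝ)..1, G x := rfl
  rw [heq, hφ, hc]
  norm_num
end

section
/- Let Δ = {z ∈ ℂ : |z| < 1} and let u₁, u₂ : Δ → ℝ be harmonic functions on Δ. Assume that neither u₁ nor u₂ is a constant function, and that there do not exist constants c₁, c₂ ∈ ℝ with u₂(z) = c₁·u₁(z) + c₂ for all z ∈ Δ. Then there exists z₀ ∈ Δ such that u₁(z₀) ∈ ℚ and u₂(z₀) ∈ ℚ. -/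
open Complex Set

/-- The "complex derivative" `∂u/∂x - i ∂u/∂y` of a harmonic function; it is holomorphic. -/
noncomputable def hderiv (u : ℂ → ℝ) (z : ℂ) : ℂ :=
  (pdx u z : ℂ) - (pdy u z : ℂ) * Complex.I

@[simp] lemma hderiv_re (u : ℂ → ℝ) (z : ℂ) : (hderiv u z).re = pdx u z := by simp [hderiv]
@[simp] lemma hderiv_im (u : ℂ → ℝ) (z : ℂ) : (hderiv u z).im = - pdy u z := by simp [hderiv]

/-- A real-linear continuous map on ℂ is determined by its values at `1` and `I`. -/
lemma clm_ext_complex {F : Type*} [NormedAddCommGroup F] [NormedSpace ℝ F]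
    (T S : ℂ →L[ℝ] F) (h1 : T 1 = S 1) (hI : T Complex.I = S Complex.I) : T = S := by
  ext w
  have hw : w = w.re • (1 : ℂ) + w.im • Complex.I := by
    simp [Complex.real_smul, Complex.re_add_im]
  rw [hw, map_add, map_add, map_smul, map_smul, map_smul, map_smul, h1, hI]

lemma pd_hasFDerivAt {u : ℂ → ℝ} (hu : ContDiffOn ℝ 2 u (Metric.ball (0:ℂ) 1)) {z : ℂ}
    (hz : z ∈ Metric.ball (0:ℂ) 1) (v : ℂ) :
    HasFDerivAt (fun w => fderiv ℝ u w v)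
      ((ContinuousLinearMap.apply ℝ ℝ v).comp (fderiv ℝ (fderiv ℝ u) z)) z := by
  have h1 : ContDiffOn ℝ 1 (fderiv ℝ u) (Metric.ball (0:ℂ) 1) :=
    hu.fderiv_of_isOpen Metric.isOpen_ball (by norm_num)
  have h2 : DifferentiableAt ℝ (fderiv ℝ u) z :=
    (h1.contDiffAt (Metric.isOpen_ball.mem_nhds hz)).differentiableAt one_ne_zero
  exact (ContinuousLinearMap.apply ℝ ℝ v).hasFDerivAt.comp z h2.hasFDerivAt

/-- The Cauchy–Riemann equations for `hderiv u` of a harmonic `u`: it is complex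
differentiable at every point of the disc. -/
lemma hderiv_differentiableAt {u : ℂ → ℝ}
    (hu : ContDiffOn ℝ 2 u (Metric.ball (0:ℂ) 1))
    (hharm : ∀ z ∈ Metric.ball (0:ℂ) 1, pdx (pdx u) z + pdy (pdy u) z = 0)
    {z : ℂ} (hz : z ∈ Metric.ball (0:ℂ) 1) :
    DifferentiableAt ℂ (hderiv u) z := by
  set H := fderiv ℝ (fderiv ℝ u) z with hHdef
  have hP : HasFDerivAt (pdx u) ((ContinuousLinearMap.apply ℝ ℝ 1).comp H) z :=
    pd_hasFDerivAt hu hz 1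
  have hQ : HasFDerivAt (pdy u) ((ContinuousLinearMap.apply ℝ ℝ Complex.I).comp H) z :=
    pd_hasFDerivAt hu hz Complex.I
  set L : ℂ →L[ℝ] ℂ :=
    Complex.ofRealCLM.comp ((ContinuousLinearMap.apply ℝ ℝ 1).comp H) -
      (((ContinuousLinearMap.apply ℝ ℝ Complex.I).comp H)).smulRight Complex.I with hLdef
  have hfeq : hderiv u = fun w => Complex.ofRealCLM (pdx u w) - (pdy u w) • Complex.I := by
    funext w
    simp [hderiv, Complex.real_smul]
  have hf : HasFDerivAt (hderiv u) L z := by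
    rw [hfeq]
    exact (Complex.ofRealCLM.hasFDerivAt.comp z hP).sub (hQ.smul_const Complex.I)
  have hsymm : IsSymmSndFDerivAt ℝ u z :=
    (hu.contDiffAt (Metric.isOpen_ball.mem_nhds hz)).isSymmSndFDerivAt (by simp)
  have hsym : H 1 Complex.I = H Complex.I 1 := hsymm 1 Complex.I
  have hh : H 1 1 + H Complex.I Complex.I = 0 := by
    have := hharm z hz
    have e1 : pdx (pdx u) z = H 1 1 := by
      have : fderiv ℝ (pdx u) z = (ContinuousLinearMap.apply ℝ ℝ 1).comp H := hP.fderiv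
      simp [pdx, this]
    have e2 : pdy (pdy u) z = H Complex.I Complex.I := by
      have : fderiv ℝ (pdy u) z = (ContinuousLinearMap.apply ℝ ℝ Complex.I).comp H := hQ.fderiv
      simp [pdy, pdx, this]
    rw [e1, e2] at this
    exact this
  set L' : ℂ →L[ℂ] ℂ := (L 1) • (ContinuousLinearMap.id ℂ ℂ) with hL'def
  have hrestr : L'.restrictScalars ℝ = L := by
    apply clm_ext_complex
    · simp [hL'def]
    · have hL1 : L 1 = (H 1 1 : ℂ) - (H 1 Complex.I : ℂ) * Complex.I := by
        simp [hLdef, Complex.real_smul]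
      have hLI : L Complex.I = (H Complex.I 1 : ℂ) - (H Complex.I Complex.I : ℂ) * Complex.I := by
        simp [hLdef, Complex.real_smul]
      have : L 1 * Complex.I = L Complex.I := by
        rw [hL1, hLI]
        apply Complex.ext <;> simp <;> linarith
      simpa [hL'def, smul_eq_mul, mul_comm] using this
  rw [← hf.fderiv] at hrestr
  exact (differentiableAt_iff_restrictScalars ℝ hf.differentiableAt).2 ⟨L', hrestr⟩

/-- If the gradients of `u₂` and `c • u₁` agree on the disc, then `u₂` is the corresponding
affine function of `u₁`. -/
lemma affine_of_pd_proportional {u₁ u₂ : ℂ → ℝ}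
    (h₁ : ContDiffOn ℝ 2 u₁ (Metric.ball (0:ℂ) 1)) (h₂ : ContDiffOn ℝ 2 u₂ (Metric.ball (0:ℂ) 1))
    (c : ℝ)
    (h : ∀ z ∈ Metric.ball (0:ℂ) 1, pdx u₂ z = c * pdx u₁ z ∧ pdy u₂ z = c * pdy u₁ z) :
    ∀ z ∈ Metric.ball (0:ℂ) 1, u₂ z = c * u₁ z + (u₂ 0 - c * u₁ 0) := by
  set B := Metric.ball (0:ℂ) 1
  have d₁ : ∀ z ∈ B, DifferentiableAt ℝ u₁ z := fun z hz =>
    (h₁.contDiffAt (Metric.isOpen_ball.mem_nhds hz)).differentiableAt two_ne_zero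
  have d₂ : ∀ z ∈ B, DifferentiableAt ℝ u₂ z := fun z hz =>
    (h₂.contDiffAt (Metric.isOpen_ball.mem_nhds hz)).differentiableAt two_ne_zero
  set v : ℂ → ℝ := fun z => u₂ z - c * u₁ z with hvdef
  have hv : DifferentiableOn ℝ v B := fun z hz =>
    ((d₂ z hz).sub ((d₁ z hz).const_mul c)).differentiableWithinAt
  have hfz : ∀ z ∈ B, fderivWithin ℝ v B z = 0 := by
    intro z hz
    have hder : HasFDerivAt v (fderiv ℝ u₂ z - c • fderiv ℝ u₁ z) z :=
      (d₂ z hz).hasFDerivAt.sub (((d₁ z hz).hasFDerivAt).const_mul c)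
    have hzero : fderiv ℝ u₂ z - c • fderiv ℝ u₁ z = 0 := by
      apply clm_ext_complex
      · have := (h z hz).1; simp only [pdx] at this; simp [this]
      · have := (h z hz).2; simp only [pdy] at this; simp [this]
    rw [fderivWithin_of_isOpen Metric.isOpen_ball hz, hder.fderiv, hzero]
  intro z hz
  have h0 : (0:ℂ) ∈ B := Metric.mem_ball_self one_pos
  have := (convex_ball (0:ℂ) 1).is_const_of_fderivWithin_eq_zero hv hfz hz h0
  simp only [hvdef] at this
  linarith

/-- A function with vanishing gradient on the disc is constant there. -/
lemma const_of_pd_zero {u : ℂ → ℝ}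
    (h : ContDiffOn ℝ 2 u (Metric.ball (0:ℂ) 1))
    (hpd : ∀ z ∈ Metric.ball (0:ℂ) 1, pdx u z = 0 ∧ pdy u z = 0) :
    ∀ z ∈ Metric.ball (0:ℂ) 1, u z = u 0 := by
  have h0 : ContDiffOn ℝ 2 (fun _ : ℂ => (0:ℝ)) (Metric.ball (0:ℂ) 1) := contDiffOn_const
  have := affine_of_pd_proportional h0 h 0 (fun z hz => by
    simpa using hpd z hz)
  intro z hz
  simpa using this z hz

/-- Let `u₁, u₂` be nonconstant harmonic functions on the unit disc such that `u₂` is not an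
affine function of `u₁`. Then there is a point of the disc where both take rational values. -/
theorem exists_simultaneous_rational_values
    (u₁ u₂ : ℂ → ℝ)
    (h₁ : IsHarmonicOn u₁ (Metric.ball (0:ℂ) 1))
    (h₂ : IsHarmonicOn u₂ (Metric.ball (0:ℂ) 1))
    (hnc₁ : ¬∃ c : ℝ, ∀ z ∈ Metric.ball (0:ℂ) 1, u₁ z = c)
    (hnc₂ : ¬∃ c : ℝ, ∀ z ∈ Metric.ball (0:ℂ) 1, u₂ z = c)
    (hnaffine : ¬∃ c₁ c₂ : ℝ, ∀ z ∈ Metric.ball (0:ℂ) 1, u₂ z = c₁ * u₁ z + c₂) :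
    ∃ z₀ ∈ Metric.ball (0:ℂ) 1, (∃ q : ℚ, u₁ z₀ = q) ∧ (∃ q : ℚ, u₂ z₀ = q) := by
  set B := Metric.ball (0:ℂ) 1 with hBdef
  by_cases hdet : ∀ z ∈ B, pdx u₁ z * pdy u₂ z - pdy u₁ z * pdx u₂ z = 0
  · -- degenerate case: the Jacobian of (u₁, u₂) vanishes identically; contradiction
    exfalso
    have hf₁ : ∀ z ∈ B, DifferentiableAt ℂ (hderiv u₁) z := fun z hz =>
      hderiv_differentiableAt h₁.1 h₁.2 hz
    have hf₂ : ∀ z ∈ B, DifferentiableAt ℂ (hderiv u₂) z := fun z hz =>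
      hderiv_differentiableAt h₂.1 h₂.2 hz
    have hf₁an : AnalyticOnNhd ℂ (hderiv u₁) B :=
      DifferentiableOn.analyticOnNhd (fun z hz => (hf₁ z hz).differentiableWithinAt)
        Metric.isOpen_ball
    have hf₂an : AnalyticOnNhd ℂ (hderiv u₂) B :=
      DifferentiableOn.analyticOnNhd (fun z hz => (hf₂ z hz).differentiableWithinAt)
        Metric.isOpen_ball
    -- `u₁` nonconstant gives a point where `hderiv u₁ ≠ 0`
    have hzs : ∃ z ∈ B, hderiv u₁ z ≠ 0 := by
      by_contra hcon
      push_neg at hcon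
      apply hnc₁
      refine ⟨u₁ 0, const_of_pd_zero h₁.1 ?_⟩
      intro z hz
      have := hcon z hz
      rw [Complex.ext_iff] at this
      simp only [hderiv_re, hderiv_im, Complex.zero_re, Complex.zero_im, neg_eq_zero] at this
      exact this
    obtain ⟨zs, hzsB, hzsne⟩ := hzs
    -- a small ball around `zs` inside `B` where `hderiv u₁ ≠ 0`
    have hev : ∀ᶠ w in nhds zs, w ∈ B ∧ hderiv u₁ w ≠ 0 :=
      (Metric.isOpen_ball.eventually_mem hzsB).and
        (((hf₁ zs hzsB).continuousAt).eventually_ne hzsne)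
    obtain ⟨ε, hε, hball⟩ := Metric.eventually_nhds_iff_ball.1 hev
    set U := Metric.ball zs ε with hUdef
    set lam : ℂ → ℂ := fun w => hderiv u₂ w / hderiv u₁ w with hlamdef
    have hlam : AnalyticOnNhd ℂ lam U := by
      apply DifferentiableOn.analyticOnNhd _ Metric.isOpen_ball
      intro w hw
      exact (((hf₂ w (hball w hw).1).div (hf₁ w (hball w hw).1)
        (hball w hw).2)).differentiableWithinAt
    have hlamre : ∀ w ∈ U, (lam w).im = 0 := by
      intro w hw
      have h0 := hdet w (hball w hw).1
      rw [hlamdef]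
      simp only
      rw [Complex.div_im, hderiv_re, hderiv_im, hderiv_re, hderiv_im, div_sub_div_same]
      have hnum : -pdy u₂ w * pdx u₁ w - pdx u₂ w * -pdy u₁ w = 0 := by linarith
      rw [hnum, zero_div]
    rcases hlam.is_constant_or_isOpen (convex_ball zs ε).isPreconnected with ⟨w0, hw0⟩ | hopen
    · -- the quotient is a real constant `c`; then `u₂` is affine in `u₁`
      have hzsU : zs ∈ U := Metric.mem_ball_self hε
      have hw0im : w0.im = 0 := by rw [← hw0 zs hzsU]; exact hlamre zs hzsU
      set c : ℝ := w0.re with hcdef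
      have hw0c : w0 = (c : ℂ) := by
        apply Complex.ext <;> simp [hcdef, hw0im]
      set g : ℂ → ℂ := fun w => hderiv u₂ w - w0 * hderiv u₁ w with hgdef
      have hgan : AnalyticOnNhd ℂ g B := hf₂an.sub (analyticOnNhd_const.mul hf₁an)
      have hgU : EqOn g 0 U := by
        intro w hw
        have hne := (hball w hw).2
        have := hw0 w hw
        rw [hlamdef] at this
        simp only at this
        rw [div_eq_iff hne] at this
        simp only [hgdef, Pi.zero_apply]
        rw [this]
        ring
      have hg0 : EqOn g 0 B := by
        apply hgan.eqOn_zero_of_preconnected_of_eventuallyEq_zero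
          (convex_ball (0:ℂ) 1).isPreconnected hzsB
        exact Filter.eventuallyEq_of_mem (Metric.isOpen_ball.mem_nhds hzsU) hgU
      have hrel : ∀ z ∈ B, pdx u₂ z = c * pdx u₁ z ∧ pdy u₂ z = c * pdy u₁ z := by
        intro z hz
        have := hg0 hz
        simp only [hgdef, Pi.zero_apply, sub_eq_zero, hw0c] at this
        have hre := congrArg Complex.re this
        have him := congrArg Complex.im this
        simp only [hderiv_re, hderiv_im, Complex.mul_re, Complex.mul_im, Complex.ofReal_re,
          Complex.ofReal_im] at hre him
        constructor
        · linarith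
        · linarith
      exact hnaffine ⟨c, u₂ 0 - c * u₁ 0, affine_of_pd_proportional h₁.1 h₂.1 c hrel⟩
    · -- the quotient is an open map with real values: impossible
      have hzsU : zs ∈ U := Metric.mem_ball_self hε
      have hopenU : IsOpen (lam '' U) := hopen U subset_rfl Metric.isOpen_ball
      have hmem : lam zs ∈ lam '' U := ⟨zs, hzsU, rfl⟩
      obtain ⟨δ, hδ, hsub⟩ := Metric.isOpen_iff.1 hopenU _ hmem
      have hmem2 : lam zs + (δ/2) * Complex.I ∈ lam '' U := by
        apply hsub
        rw [Metric.mem_ball, Complex.dist_eq]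
        have : lam zs + (δ/2) * Complex.I - lam zs = (δ/2 : ℝ) * Complex.I := by push_cast; ring
        rw [this]
        simp [abs_of_pos hδ]
        linarith
      obtain ⟨w, hwU, hw⟩ := hmem2
      have h1 := hlamre w hwU
      have h2 := congrArg Complex.im hw
      have h3 := hlamre zs hzsU
      simp [h1, h3] at h2
      linarith
  · -- nondegenerate case: inverse function theorem
    push_neg at hdet
    obtain ⟨z₀, hz₀B, hz₀⟩ := hdet
    set a := pdx u₁ z₀ with ha
    set b := pdy u₁ z₀ with hb
    set c := pdx u₂ z₀ with hc
    set d := pdy u₂ z₀ with hd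
    have hdiff₁ : ContDiffAt ℝ 2 u₁ z₀ := h₁.1.contDiffAt (Metric.isOpen_ball.mem_nhds hz₀B)
    have hdiff₂ : ContDiffAt ℝ 2 u₂ z₀ := h₂.1.contDiffAt (Metric.isOpen_ball.mem_nhds hz₀B)
    have hs₁ : HasStrictFDerivAt u₁ (fderiv ℝ u₁ z₀) z₀ := hdiff₁.hasStrictFDerivAt two_ne_zero
    have hs₂ : HasStrictFDerivAt u₂ (fderiv ℝ u₂ z₀) z₀ := hdiff₂.hasStrictFDerivAt two_ne_zero
    set L : ℂ →L[ℝ] ℝ × ℝ := (fderiv ℝ u₁ z₀).prod (fderiv ℝ u₂ z₀) with hLdef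
    set F : ℂ → ℝ × ℝ := fun z => (u₁ z, u₂ z) with hFdef
    have hF : HasStrictFDerivAt F L z₀ := hs₁.prodMk hs₂
    have happ : ∀ x y : ℝ, L ((x:ℂ) + (y:ℂ) * Complex.I) = (x * a + y * b, x * c + y * d) := by
      intro x y
      have hxy : (x:ℂ) + (y:ℂ) * Complex.I = x • (1:ℂ) + y • Complex.I := by
        simp [Complex.real_smul]
      rw [hxy, map_add, map_smul, map_smul]
      simp only [hLdef, ContinuousLinearMap.prod_apply, Prod.smul_mk, Prod.mk_add_mk,
        smul_eq_mul]
      rfl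
    have hsurj : LinearMap.range (L : ℂ →ₗ[ℝ] ℝ × ℝ) = ⊤ := by
      rw [LinearMap.range_eq_top]
      rintro ⟨p, q⟩
      refine ⟨((d * p - b * q) / (a * d - b * c) : ℝ) +
        ((a * q - c * p) / (a * d - b * c) : ℝ) * Complex.I, ?_⟩
      rw [ContinuousLinearMap.coe_coe, happ]
      have hne : a * d - b * c ≠ 0 := hz₀
      have hne' : d * a - b * c ≠ 0 := by rwa [mul_comm d a]
      refine Prod.ext ?_ ?_ <;> simp only <;> field_simp <;> ring
    have hmap : Filter.map F (nhds z₀) = nhds (F z₀) := hF.map_nhds_eq_of_surj hsurj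
    have himg : F '' B ∈ nhds (F z₀) := by
      rw [← hmap]
      exact Filter.image_mem_map (Metric.isOpen_ball.mem_nhds hz₀B)
    have hdense : DenseRange (Prod.map ((↑) : ℚ → ℝ) ((↑) : ℚ → ℝ)) :=
      Rat.denseRange_cast.prodMap Rat.denseRange_cast
    have hclos := hdense (F z₀)
    obtain ⟨p, hpF, hpD⟩ := mem_closure_iff_nhds.1 hclos _ himg
    obtain ⟨⟨q₁, q₂⟩, hq⟩ := hpD
    obtain ⟨z, hzB, hFz⟩ := hpF
    have hpe := hFz.trans hq.symm
    simp only [hFdef, Prod.map_apply, Prod.mk.injEq] at hpe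
    exact ⟨z, hzB, ⟨q₁, hpe.1⟩, ⟨q₂, hpe.2⟩⟩
end

section
/- Let Ω ⊆ ℂ be open, let G be a real-valued infinitely differentiable function on (Ω × Ω) ∖ Diag_Ω (where Diag_Ω = {(z, z) : z ∈ Ω}) such that for each fixed z ∈ Ω, the function z′ ↦ G(z, z′) is harmonic on Ω ∖ {z}. Let γ : [0,1] → Ω be a piecewise continuously differentiable closed curve with image Γ. Then the function z′ ↦ ∫₀¹ ( ∂G/∂x(γ(t), z′)·(Im γ)′(t) − ∂G/∂y(γ(t), z′)·(Re γ)′(t) ) dt, where ∂/∂x and ∂/∂y denote partial derivatives in the real and imaginary parts of the first variable, is harmonic on Ω ∖ Γ. -/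
open Complex Set

open MeasureTheory

set_option linter.unusedVariables false
set_option linter.unusedSectionVars false
set_option synthInstance.maxHeartbeats 1000000
set_option maxHeartbeats 2000000

noncomputable def Jint (c : ℝ → ℝ) (γ : ℝ → ℂ) {E : Type*} [NormedAddCommGroup E]
    [NormedSpace ℝ E] (φ : ℂ × ℂ → E) (z : ℂ) : E :=
  ∫ t in Set.Ioc (0:ℝ) 1, c t • φ (γ t, z)

section Aux

variable {V : Set (ℂ × ℂ)} {γ : ℝ → ℂ} {c : ℝ → ℝ} {U : Set ℂ} {M : ℝ}
variable {E : Type*} [NormedAddCommGroup E] [NormedSpace ℝ E]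

theorem bound_exists (hV : IsOpen V) (hγc : ContinuousOn γ (Icc 0 1)) (hU : IsOpen U)
    (hUV : ∀ t ∈ Icc (0:ℝ) 1, ∀ z ∈ U, (γ t, z) ∈ V)
    {φ : ℂ × ℂ → E} (hφ : ContinuousOn φ V) {z₀ : ℂ} (hz₀ : z₀ ∈ U) :
    ∃ ε > 0, ∃ C, 0 ≤ C ∧ Metric.closedBall z₀ ε ⊆ U ∧
      ∀ t ∈ Icc (0:ℝ) 1, ∀ z ∈ Metric.closedBall z₀ ε, ‖φ (γ t, z)‖ ≤ C := by
  obtain ⟨ε, hε, hball⟩ := (Metric.nhds_basis_closedBall.mem_iff).1 (hU.mem_nhds hz₀)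
  have hK : IsCompact ((γ '' Icc 0 1) ×ˢ Metric.closedBall z₀ ε) :=
    ((isCompact_Icc.image_of_continuousOn hγc)).prod (isCompact_closedBall _ _)
  have hKV : (γ '' Icc 0 1) ×ˢ Metric.closedBall z₀ ε ⊆ V := by
    rintro ⟨w, z⟩ ⟨⟨t, ht, rfl⟩, hz⟩
    exact hUV t ht z (hball hz)
  obtain ⟨C, hC⟩ := hK.exists_bound_of_continuousOn (hφ.mono hKV)
  refine ⟨ε, hε, max C 0, le_max_right _ _, hball, fun t ht z hz => ?_⟩
  exact le_trans (hC _ ⟨⟨t, ht, rfl⟩, hz⟩) (le_max_left _ _)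

theorem meas_J (hγc : ContinuousOn γ (Icc 0 1))
    (hUV : ∀ t ∈ Icc (0:ℝ) 1, ∀ z ∈ U, (γ t, z) ∈ V) (hc : Measurable c)
    {φ : ℂ × ℂ → E} (hφ : ContinuousOn φ V) {z : ℂ} (hz : z ∈ U) :
    AEStronglyMeasurable (fun t => c t • φ (γ t, z))
      (volume.restrict (Set.Ioc (0:ℝ) 1)) := by
  apply AEStronglyMeasurable.smul (hc.aestronglyMeasurable)
  have : ContinuousOn (fun t => φ (γ t, z)) (Set.Ioc (0:ℝ) 1) := by
    have h1 : ContinuousOn (fun t => ((γ t, z) : ℂ × ℂ)) (Set.Ioc (0:ℝ) 1) :=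
      (hγc.mono Ioc_subset_Icc_self).prodMk continuousOn_const
    exact hφ.comp h1 (fun t ht => hUV t (Ioc_subset_Icc_self ht) z hz)
  exact this.aestronglyMeasurable measurableSet_Ioc

theorem integrable_J (hV : IsOpen V) (hγc : ContinuousOn γ (Icc 0 1)) (hU : IsOpen U)
    (hUV : ∀ t ∈ Icc (0:ℝ) 1, ∀ z ∈ U, (γ t, z) ∈ V) (hc : Measurable c)
    (hcM : ∀ᵐ t ∂(volume.restrict (Set.Ioc (0:ℝ) 1)), |c t| ≤ M)
    {φ : ℂ × ℂ → E} (hφ : ContinuousOn φ V) {z : ℂ} (hz : z ∈ U) :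
    Integrable (fun t => c t • φ (γ t, z)) (volume.restrict (Set.Ioc (0:ℝ) 1)) := by
  obtain ⟨ε, hε, C, hC0, hball, hbd⟩ := bound_exists hV hγc hU hUV hφ hz
  refine Integrable.mono' (integrable_const (M * C)) (meas_J hγc hUV hc hφ hz) ?_
  filter_upwards [hcM, ae_restrict_mem measurableSet_Ioc] with t htM ht
  rw [norm_smul]
  have h1 : ‖φ (γ t, z)‖ ≤ C :=
    hbd t (Ioc_subset_Icc_self ht) z (Metric.mem_closedBall_self hε.le)
  calc ‖c t‖ * ‖φ (γ t, z)‖ ≤ M * C := by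
        apply mul_le_mul htM h1 (norm_nonneg _) (le_trans (abs_nonneg _) htM)
    _ = M * C := rfl

end Aux

section Aux2
set_option linter.unusedSectionVars false

variable {V : Set (ℂ × ℂ)} {γ : ℝ → ℂ} {c : ℝ → ℝ} {U : Set ℂ} {M : ℝ}
variable {E : Type*} [NormedAddCommGroup E] [NormedSpace ℝ E]

/-- The second-slot derivative kernel. -/
noncomputable def psiK (φ : ℂ × ℂ → E) (q : ℂ × ℂ) : ℂ →L[ℝ] E :=
  (fderiv ℝ φ q).comp (ContinuousLinearMap.inr ℝ ℂ ℂ)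

theorem psiK_contDiffOn (hV : IsOpen V) {φ : ℂ × ℂ → E} (hφ : ContDiffOn ℝ (⊤ : ℕ∞) φ V) :
    ContDiffOn ℝ (⊤ : ℕ∞) (psiK φ) V := by
  have h1 : ContDiffOn ℝ (⊤ : ℕ∞) (fderiv ℝ φ) V :=
    hφ.fderiv_of_isOpen hV (by simp)
  have h2 := ((ContinuousLinearMap.compL ℝ ℂ (ℂ × ℂ) E).flip
      (ContinuousLinearMap.inr ℝ ℂ ℂ)).contDiff (n := (⊤ : ℕ∞))
  exact h2.comp_contDiffOn h1

theorem hasFDerivAt_pair (w : ℂ) (z : ℂ) :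
    HasFDerivAt (fun z' : ℂ => ((w, z') : ℂ × ℂ)) (ContinuousLinearMap.inr ℝ ℂ ℂ) z :=
  (hasFDerivAt_const w z).prodMk (hasFDerivAt_id z)

theorem hasFDerivAt_J (hV : IsOpen V) (hγc : ContinuousOn γ (Icc 0 1)) (hU : IsOpen U)
    (hUV : ∀ t ∈ Icc (0:ℝ) 1, ∀ z ∈ U, (γ t, z) ∈ V) (hc : Measurable c)
    (hcM : ∀ᵐ t ∂(volume.restrict (Set.Ioc (0:ℝ) 1)), |c t| ≤ M)
    {φ : ℂ × ℂ → E} (hφ : ContDiffOn ℝ (⊤ : ℕ∞) φ V) {z₀ : ℂ} (hz₀ : z₀ ∈ U) :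
    HasFDerivAt (Jint c γ φ)
      (∫ t in Set.Ioc (0:ℝ) 1, c t • psiK φ (γ t, z₀)) z₀ := by
  obtain ⟨ε, hε, C, hC0, hball, hbd⟩ :=
    bound_exists hV hγc hU hUV ((psiK_contDiffOn hV hφ).continuousOn) hz₀
  have hmem : ∀ t ∈ Set.Ioc (0:ℝ) 1, ∀ z ∈ Metric.ball z₀ ε, (γ t, z) ∈ V := fun t ht z hz =>
    hUV t (Ioc_subset_Icc_self ht) z (hball (Metric.ball_subset_closedBall hz))
  apply hasFDerivAt_integral_of_dominated_of_fderiv_le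
    (F' := fun z t => c t • psiK φ (γ t, z)) (bound := fun _ => M * C) (Metric.ball_mem_nhds z₀ hε)
  · filter_upwards [hU.mem_nhds hz₀] with z hz using
      meas_J hγc hUV hc hφ.continuousOn hz
  · exact integrable_J hV hγc hU hUV hc hcM hφ.continuousOn hz₀
  · exact meas_J hγc hUV hc (psiK_contDiffOn hV hφ).continuousOn hz₀
  · filter_upwards [hcM, ae_restrict_mem measurableSet_Ioc] with t htM ht
    intro z hz
    rw [norm_smul (β := ℂ →L[ℝ] E) (c t) (psiK φ (γ t, z))]
    exact mul_le_mul htM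
      (hbd t (Ioc_subset_Icc_self ht) z (Metric.ball_subset_closedBall hz))
      (norm_nonneg _) (le_trans (abs_nonneg _) htM)
  · exact integrable_const _
  · filter_upwards [ae_restrict_mem measurableSet_Ioc] with t ht
    intro z hz
    have hdiff : DifferentiableAt ℝ φ (γ t, z) :=
      (hφ.contDiffAt (hV.mem_nhds (hmem t ht z hz))).differentiableAt (by simp)
    exact ((hdiff.hasFDerivAt.comp z (hasFDerivAt_pair (γ t) z))).const_smul (c t)

end Aux2

section Aux3
set_option linter.unusedSectionVars false
variable {V : Set (ℂ × ℂ)} {γ : ℝ → ℂ} {c : ℝ → ℝ} {U : Set ℂ} {M : ℝ}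

theorem continuousOn_J {E : Type*} [NormedAddCommGroup E] [NormedSpace ℝ E]
    (hV : IsOpen V) (hγc : ContinuousOn γ (Icc 0 1)) (hU : IsOpen U)
    (hUV : ∀ t ∈ Icc (0:ℝ) 1, ∀ z ∈ U, (γ t, z) ∈ V) (hc : Measurable c)
    (hcM : ∀ᵐ t ∂(volume.restrict (Set.Ioc (0:ℝ) 1)), |c t| ≤ M)
    {φ : ℂ × ℂ → E} (hφ : ContinuousOn φ V) :
    ContinuousOn (Jint c γ φ) U := by
  intro z₀ hz₀
  apply ContinuousAt.continuousWithinAt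
  obtain ⟨ε, hε, C, hC0, hball, hbd⟩ := bound_exists hV hγc hU hUV hφ hz₀
  apply continuousAt_of_dominated (bound := fun _ => M * C)
  · filter_upwards [hU.mem_nhds hz₀] with z hz using meas_J hγc hUV hc hφ hz
  · filter_upwards [Metric.closedBall_mem_nhds z₀ hε] with z hz
    filter_upwards [hcM, ae_restrict_mem measurableSet_Ioc] with t htM ht
    rw [norm_smul]
    exact mul_le_mul htM (hbd t (Ioc_subset_Icc_self ht) z hz)
      (norm_nonneg _) (le_trans (abs_nonneg _) htM)
  · exact integrable_const _
  · filter_upwards [ae_restrict_mem measurableSet_Ioc] with t ht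
    have h1 : ContinuousAt (fun z : ℂ => ((γ t, z) : ℂ × ℂ)) z₀ :=
      (continuous_const.prodMk continuous_id).continuousAt
    have h2 : ContinuousAt φ (γ t, z₀) :=
      hφ.continuousAt (hV.mem_nhds (hUV t (Ioc_subset_Icc_self ht) z₀ hz₀))
    exact (h2.comp h1).const_smul (c t)

theorem contDiffOn_J (hV : IsOpen V) (hγc : ContinuousOn γ (Icc 0 1)) (hU : IsOpen U)
    (hUV : ∀ t ∈ Icc (0:ℝ) 1, ∀ z ∈ U, (γ t, z) ∈ V) (hc : Measurable c)
    (hcM : ∀ᵐ t ∂(volume.restrict (Set.Ioc (0:ℝ) 1)), |c t| ≤ M) :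
    ∀ (n : ℕ) {E : Type} [NormedAddCommGroup E] [NormedSpace ℝ E] [CompleteSpace E]
      (φ : ℂ × ℂ → E), ContDiffOn ℝ (⊤ : ℕ∞) φ V → ContDiffOn ℝ n (Jint c γ φ) U := by
  intro n
  induction n with
  | zero =>
    intro E _ _ _ φ hφ
    rw [Nat.cast_zero, contDiffOn_zero]
    exact continuousOn_J hV hγc hU hUV hc hcM hφ.continuousOn
  | succ n ih =>
    intro E _ _ _ φ hφ
    have hn : ((n + 1 : ℕ) : WithTop ℕ∞) = (n : WithTop ℕ∞) + 1 := by push_cast; ring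
    rw [hn, contDiffOn_succ_iff_fderiv_of_isOpen hU]
    refine ⟨fun z hz => ((hasFDerivAt_J hV hγc hU hUV hc hcM hφ hz
      ).differentiableAt).differentiableWithinAt, by simp, ?_⟩
    have h1 : ContDiffOn ℝ n (Jint c γ (psiK φ)) U :=
      ih (psiK φ) (psiK_contDiffOn hV hφ)
    exact h1.congr fun z hz => (hasFDerivAt_J hV hγc hU hUV hc hcM hφ hz).fderiv

end Aux3

section Aux4
set_option linter.unusedSectionVars false
variable {V : Set (ℂ × ℂ)} {γ : ℝ → ℂ} {c : ℝ → ℝ} {U : Set ℂ} {M : ℝ}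
variable {E : Type*} [NormedAddCommGroup E] [NormedSpace ℝ E]

theorem fderiv_J_apply [CompleteSpace E] (hV : IsOpen V) (hγc : ContinuousOn γ (Icc 0 1))
    (hU : IsOpen U)
    (hUV : ∀ t ∈ Icc (0:ℝ) 1, ∀ z ∈ U, (γ t, z) ∈ V) (hc : Measurable c)
    (hcM : ∀ᵐ t ∂(volume.restrict (Set.Ioc (0:ℝ) 1)), |c t| ≤ M)
    {φ : ℂ × ℂ → E} (hφ : ContDiffOn ℝ (⊤ : ℕ∞) φ V) {z : ℂ} (hz : z ∈ U) (v : ℂ) :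
    fderiv ℝ (Jint c γ φ) z v = Jint c γ (fun q => fderiv ℝ φ q (0, v)) z := by
  rw [(hasFDerivAt_J hV hγc hU hUV hc hcM hφ hz).fderiv]
  rw [ContinuousLinearMap.integral_apply
    (integrable_J hV hγc hU hUV hc hcM (psiK_contDiffOn hV hφ).continuousOn hz) v]
  simp [Jint, psiK]

/-- slice in the second variable -/
theorem fderiv_slice_snd {ψ : ℂ × ℂ → E} {w z : ℂ} (hdiff : DifferentiableAt ℝ ψ (w, z))
    (v : ℂ) : fderiv ℝ (fun z' => ψ (w, z')) z v = fderiv ℝ ψ (w, z) (0, v) := by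
  have h : HasFDerivAt (fun z' => ψ (w, z'))
      ((fderiv ℝ ψ (w, z)).comp (ContinuousLinearMap.inr ℝ ℂ ℂ)) z :=
    hdiff.hasFDerivAt.comp z (hasFDerivAt_pair w z)
  rw [h.fderiv]; simp

/-- slice in the first variable -/
theorem fderiv_slice_fst {ψ : ℂ × ℂ → E} {w z : ℂ} (hdiff : DifferentiableAt ℝ ψ (w, z))
    (v : ℂ) : fderiv ℝ (fun w' => ψ (w', z)) w v = fderiv ℝ ψ (w, z) (v, 0) := by
  have hpair : HasFDerivAt (fun w' : ℂ => ((w', z) : ℂ × ℂ))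
      (ContinuousLinearMap.inl ℝ ℂ ℂ) w := (hasFDerivAt_id w).prodMk (hasFDerivAt_const z w)
  have h : HasFDerivAt (fun w' => ψ (w', z))
      ((fderiv ℝ ψ (w, z)).comp (ContinuousLinearMap.inl ℝ ℂ ℂ)) w :=
    hdiff.hasFDerivAt.comp w hpair
  rw [h.fderiv]; simp

theorem Dv_contDiffOn (hV : IsOpen V) {ψ : ℂ × ℂ → E} (hψ : ContDiffOn ℝ (⊤ : ℕ∞) ψ V)
    (a : ℂ × ℂ) : ContDiffOn ℝ (⊤ : ℕ∞) (fun q => fderiv ℝ ψ q a) V :=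
  (hψ.fderiv_of_isOpen hV (by simp)).clm_apply contDiffOn_const

theorem Dv_swap (hV : IsOpen V) {ψ : ℂ × ℂ → E} (hψ : ContDiffOn ℝ (⊤ : ℕ∞) ψ V)
    {q : ℂ × ℂ} (hq : q ∈ V) (a b : ℂ × ℂ) :
    fderiv ℝ (fun q' => fderiv ℝ ψ q' b) q a = fderiv ℝ (fun q' => fderiv ℝ ψ q' a) q b := by
  have hf' : ContDiffOn ℝ (⊤ : ℕ∞) (fderiv ℝ ψ) V := hψ.fderiv_of_isOpen hV (by simp)
  have hd : DifferentiableAt ℝ (fderiv ℝ ψ) q :=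
    (hf'.contDiffAt (hV.mem_nhds hq)).differentiableAt (by simp)
  have key : ∀ u : ℂ × ℂ, fderiv ℝ (fun q' => fderiv ℝ ψ q' u) q
      = (fderiv ℝ (fderiv ℝ ψ) q).flip u := by
    intro u
    have := fderiv_clm_apply (c := fderiv ℝ ψ) (u := fun _ => u) hd
      (differentiableAt_const u)
    simpa using this
  have hsymm : ∀ v w : ℂ × ℂ,
      fderiv ℝ (fderiv ℝ ψ) q v w = fderiv ℝ (fderiv ℝ ψ) q w v := by
    intro v w
    apply second_derivative_symmetric_of_eventually (f := ψ)
    · filter_upwards [hV.mem_nhds hq] with y hy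
      exact ((hψ.contDiffAt (hV.mem_nhds hy)).differentiableAt (by simp)).hasFDerivAt
    · exact hd.hasFDerivAt
  rw [key a, key b]
  simp only [ContinuousLinearMap.flip_apply]
  exact hsymm a b

end Aux4

theorem exists_piece {τ : ℕ → ℝ} : ∀ {N : ℕ}, (∀ j < N, τ j < τ (j + 1)) → ∀ {t : ℝ},
    τ 0 < t → t ≤ τ N → ∃ j < N, τ j < t ∧ t ≤ τ (j + 1) := by
  intro N
  induction N with
  | zero => intro _ t h1 h2; exact absurd (h1.trans_le h2) (lt_irrefl _)
  | succ N ih =>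
    intro hmono t h1 h2
    by_cases ht : t ≤ τ N
    · obtain ⟨j, hj, hj1, hj2⟩ := ih (fun j hj => hmono j (hj.trans (Nat.lt_succ_self N))) h1 ht
      exact ⟨j, hj.trans (Nat.lt_succ_self N), hj1, hj2⟩
    · exact ⟨N, Nat.lt_succ_self N, lt_of_not_ge ht, h2⟩

theorem curve_deriv_bound {γ : ℝ → ℂ} (hγ : PiecewiseC1 γ) :
    ∃ M : ℝ, (∀ᵐ t ∂(volume.restrict (Set.Ioc (0:ℝ) 1)),
        |deriv (fun s => (γ s).re) t| ≤ M) ∧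
      (∀ᵐ t ∂(volume.restrict (Set.Ioc (0:ℝ) 1)),
        |deriv (fun s => (γ s).im) t| ≤ M) := by
  obtain ⟨hcont, N, τ, hτ0, hτN, hmono, hC1⟩ := hγ
  -- bound for each piece
  have hbd : ∀ j, ∃ Mj : ℝ, 0 ≤ Mj ∧ ∀ t, j < N → t ∈ Set.Ioo (τ j) (τ (j+1)) →
      ‖deriv γ t‖ ≤ Mj := by
    intro j
    by_cases hj : j < N
    · have hu : UniqueDiffOn ℝ (Set.Icc (τ j) (τ (j+1))) :=
        uniqueDiffOn_Icc (hmono j hj)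
      have hco : ContinuousOn (derivWithin γ (Set.Icc (τ j) (τ (j+1))))
          (Set.Icc (τ j) (τ (j+1))) :=
        (hC1 j hj).continuousOn_derivWithin hu le_rfl
      obtain ⟨Mj, hMj⟩ := isCompact_Icc.exists_bound_of_continuousOn hco
      refine ⟨max Mj 0, le_max_right _ _, fun t _ ht => ?_⟩
      have hnh : Set.Icc (τ j) (τ (j+1)) ∈ nhds t :=
        Filter.mem_of_superset (isOpen_Ioo.mem_nhds ht) Set.Ioo_subset_Icc_self
      have : derivWithin γ (Set.Icc (τ j) (τ (j+1))) t = deriv γ t :=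
        derivWithin_of_mem_nhds hnh
      rw [← this]
      exact le_trans (hMj t (Set.Ioo_subset_Icc_self ht)) (le_max_left _ _)
    · exact ⟨0, le_rfl, fun t h => absurd h hj⟩
  choose Mf hMf0 hMf using hbd
  set M := ∑ k ∈ Finset.range N, Mf k with hM
  have hMle : ∀ j < N, Mf j ≤ M := fun j hj =>
    Finset.single_le_sum (fun k _ => hMf0 k) (Finset.mem_range.2 hj)
  -- a.e. statement
  have hae : ∀ᵐ t ∂(volume.restrict (Set.Ioc (0:ℝ) 1)),
      ‖deriv γ t‖ ≤ M ∧ DifferentiableAt ℝ γ t := by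
    have hnull : ∀ᵐ t ∂(volume.restrict (Set.Ioc (0:ℝ) 1)), t ∉ Set.range τ :=
      ae_restrict_of_ae ((Set.countable_range τ).ae_notMem _)
    filter_upwards [hnull, ae_restrict_mem measurableSet_Ioc] with t htr ht
    have h1 : τ 0 < t := by rw [hτ0]; exact ht.1
    have h2 : t ≤ τ N := by rw [hτN]; exact ht.2
    obtain ⟨j, hj, hj1, hj2⟩ := exists_piece hmono h1 h2
    have hj2' : t < τ (j+1) := lt_of_le_of_ne hj2 (fun h => htr ⟨j+1, h.symm⟩)
    have htIoo : t ∈ Set.Ioo (τ j) (τ (j+1)) := ⟨hj1, hj2'⟩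
    have hnh : Set.Icc (τ j) (τ (j+1)) ∈ nhds t :=
      Filter.mem_of_superset (isOpen_Ioo.mem_nhds htIoo) Set.Ioo_subset_Icc_self
    have hdiff : DifferentiableAt ℝ γ t :=
      ((hC1 j hj).differentiableOn one_ne_zero).differentiableAt hnh
    exact ⟨le_trans (hMf j t hj htIoo) (hMle j hj), hdiff⟩
  refine ⟨M, ?_, ?_⟩
  · filter_upwards [hae] with t ht
    obtain ⟨hle, hdiff⟩ := ht
    have h : HasDerivAt (fun s => (γ s).re) ((deriv γ t).re) t :=
      Complex.reCLM.hasFDerivAt.comp_hasDerivAt t hdiff.hasDerivAt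
    rw [h.deriv]
    exact le_trans (Complex.abs_re_le_norm _) hle
  · filter_upwards [hae] with t ht
    obtain ⟨hle, hdiff⟩ := ht
    have h : HasDerivAt (fun s => (γ s).im) ((deriv γ t).im) t :=
      Complex.imCLM.hasFDerivAt.comp_hasDerivAt t hdiff.hasDerivAt
    rw [h.deriv]
    exact le_trans (Complex.abs_im_le_norm _) hle

/-- For a kernel `G` which is smooth off the diagonal and harmonic in the second variable,
and a piecewise `C¹` closed curve `γ` in `Ω` with image `Γ`, the function
`z′ ↦ ∫_γ d̃G(·, z′)` is harmonic on `Ω ∖ Γ`. -/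
theorem conj_integral_of_green_harmonic
    (Ω : Set ℂ) (hΩ : IsOpen Ω) (G : ℂ → ℂ → ℝ)
    (hsmooth : ContDiffOn ℝ (⊤ : ℕ∞) (fun q : ℂ × ℂ => G q.1 q.2)
      ((Ω ×ˢ Ω) \ {q : ℂ × ℂ | q.1 = q.2}))
    (hharm : ∀ z ∈ Ω, IsHarmonicOn (fun z' => G z z') (Ω \ {z}))
    (γ : ℝ → ℂ) (hγ : PiecewiseC1 γ) (hγΩ : ∀ t ∈ Set.Icc (0:ℝ) 1, γ t ∈ Ω)
    (hclosed : γ 0 = γ 1) :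
    IsHarmonicOn (fun z' => conjInt (fun z => G z z') γ)
      (Ω \ (γ '' Set.Icc (0:ℝ) 1)) := by
  set H : ℂ × ℂ → ℝ := fun q => G q.1 q.2 with hH
  set V : Set (ℂ × ℂ) := (Ω ×ˢ Ω) \ {q : ℂ × ℂ | q.1 = q.2} with hVdef
  set U : Set ℂ := Ω \ (γ '' Set.Icc (0:ℝ) 1) with hUdef
  have hγc : ContinuousOn γ (Icc 0 1) := hγ.1
  have hV : IsOpen V := (hΩ.prod hΩ).sdiff (isClosed_eq continuous_fst continuous_snd)
  have hU : IsOpen U :=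
    hΩ.sdiff (isCompact_Icc.image_of_continuousOn hγc).isClosed
  have hUV : ∀ t ∈ Icc (0:ℝ) 1, ∀ z ∈ U, (γ t, z) ∈ V := by
    intro t ht z hz
    exact ⟨⟨hγΩ t ht, hz.1⟩, fun h => hz.2 ⟨t, ht, (by simpa using h : γ t = z)⟩⟩
  -- curve derivative data
  set c₁ : ℝ → ℝ := fun t => deriv (fun s => (γ s).im) t with hc₁def
  set c₂ : ℝ → ℝ := fun t => deriv (fun s => (γ s).re) t with hc₂def
  have hc₁ : Measurable c₁ := measurable_deriv _
  have hc₂ : Measurable c₂ := measurable_deriv _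
  obtain ⟨M, hM₂, hM₁⟩ := curve_deriv_bound hγ
  -- the two kernels
  set φ₁ : ℂ × ℂ → ℝ := fun q => fderiv ℝ H q (1, 0) with hφ₁def
  set φ₂ : ℂ × ℂ → ℝ := fun q => fderiv ℝ H q (Complex.I, 0) with hφ₂def
  have hφ₁ : ContDiffOn ℝ (⊤ : ℕ∞) φ₁ V := Dv_contDiffOn hV hsmooth (1, 0)
  have hφ₂ : ContDiffOn ℝ (⊤ : ℕ∞) φ₂ V := Dv_contDiffOn hV hsmooth (Complex.I, 0)
  have hHdiff : ∀ q ∈ V, DifferentiableAt ℝ H q := fun q hq =>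
    (hsmooth.contDiffAt (hV.mem_nhds hq)).differentiableAt (by simp)
  -- the basic equality on U
  have hEqOn : ∀ z ∈ U, conjInt (fun z' => G z' z) γ
      = Jint c₁ γ φ₁ z - Jint c₂ γ φ₂ z := by
    intro z hz
    unfold conjInt
    rw [intervalIntegral.integral_of_le zero_le_one]
    have hcongr : ∀ t ∈ Set.Ioc (0:ℝ) 1,
        pdx (fun z' => G z' z) (γ t) * deriv (fun s => (γ s).im) t
          - pdy (fun z' => G z' z) (γ t) * deriv (fun s => (γ s).re) t
        = c₁ t • φ₁ (γ t, z) - c₂ t • φ₂ (γ t, z) := by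
      intro t ht
      have hq : (γ t, z) ∈ V := hUV t (Ioc_subset_Icc_self ht) z hz
      have hd := hHdiff _ hq
      have e1 : pdx (fun z' => G z' z) (γ t) = φ₁ (γ t, z) := by
        show fderiv ℝ (fun w => H (w, z)) (γ t) 1 = _
        rw [fderiv_slice_fst hd]
      have e2 : pdy (fun z' => G z' z) (γ t) = φ₂ (γ t, z) := by
        show fderiv ℝ (fun w => H (w, z)) (γ t) Complex.I = _
        rw [fderiv_slice_fst hd]
      rw [e1, e2, smul_eq_mul, smul_eq_mul, mul_comm (c₁ t), mul_comm (c₂ t)]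
    rw [MeasureTheory.setIntegral_congr_fun measurableSet_Ioc hcongr]
    exact MeasureTheory.integral_sub
      (integrable_J hV hγc hU hUV hc₁ hM₁ hφ₁.continuousOn hz)
      (integrable_J hV hγc hU hUV hc₂ hM₂ hφ₂.continuousOn hz)
  constructor
  · -- C² smoothness
    have h1 : ContDiffOn ℝ (2:ℕ) (fun z => Jint c₁ γ φ₁ z - Jint c₂ γ φ₂ z) U :=
      (contDiffOn_J hV hγc hU hUV hc₁ hM₁ 2 φ₁ hφ₁).sub
        (contDiffOn_J hV hγc hU hUV hc₂ hM₂ 2 φ₂ hφ₂)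
    have h2 : ContDiffOn ℝ (2:ℕ) (fun z' => conjInt (fun z => G z z') γ) U :=
      h1.congr fun z hz => hEqOn z hz
    exact_mod_cast h2
  · -- vanishing Laplacian
    intro z₀ hz₀
    set F : ℂ → ℝ := fun z' => conjInt (fun z => G z z') γ with hFdef
    have hFEq : EqOn F (fun z => Jint c₁ γ φ₁ z - Jint c₂ γ φ₂ z) U := by
      intro z hz
      show F z = _
      rw [hFdef]
      exact hEqOn z hz
    -- derivative of a difference of parametric integrals
    have hsub : ∀ (ψ₁ ψ₂ : ℂ × ℂ → ℝ), ContDiffOn ℝ (⊤ : ℕ∞) ψ₁ V → ContDiffOn ℝ (⊤ : ℕ∞) ψ₂ V →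
        ∀ z ∈ U, ∀ v : ℂ,
        fderiv ℝ (fun z => Jint c₁ γ ψ₁ z - Jint c₂ γ ψ₂ z) z v
          = Jint c₁ γ (fun q => fderiv ℝ ψ₁ q (0, v)) z
            - Jint c₂ γ (fun q => fderiv ℝ ψ₂ q (0, v)) z := by
      intro ψ₁ ψ₂ h1 h2 z hz v
      have d1 := (hasFDerivAt_J hV hγc hU hUV hc₁ hM₁ h1 hz).differentiableAt
      have d2 := (hasFDerivAt_J hV hγc hU hUV hc₂ hM₂ h2 hz).differentiableAt
      rw [fderiv_fun_sub d1 d2, ContinuousLinearMap.sub_apply,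
        fderiv_J_apply hV hγc hU hUV hc₁ hM₁ h1 hz v,
        fderiv_J_apply hV hγc hU hUV hc₂ hM₂ h2 hz v]
    -- first derivatives of F
    have hpd : ∀ (v : ℂ), ∀ z ∈ U, fderiv ℝ F z v
        = Jint c₁ γ (fun q => fderiv ℝ φ₁ q (0, v)) z
          - Jint c₂ γ (fun q => fderiv ℝ φ₂ q (0, v)) z := by
      intro v z hz
      have heq : F =ᶠ[nhds z] (fun z => Jint c₁ γ φ₁ z - Jint c₂ γ φ₂ z) :=
        Filter.eventuallyEq_of_mem (hU.mem_nhds hz) hFEq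
      rw [heq.fderiv_eq]
      exact hsub φ₁ φ₂ hφ₁ hφ₂ z hz v
    -- second derivatives of F
    have hpd2 : ∀ (v : ℂ),
        fderiv ℝ (fun z => fderiv ℝ F z v) z₀ v
        = Jint c₁ γ (fun q => fderiv ℝ (fun q' => fderiv ℝ φ₁ q' (0, v)) q (0, v)) z₀
          - Jint c₂ γ (fun q => fderiv ℝ (fun q' => fderiv ℝ φ₂ q' (0, v)) q (0, v)) z₀ := by
      intro v
      have heq : (fun z => fderiv ℝ F z v) =ᶠ[nhds z₀]
          (fun z => Jint c₁ γ (fun q => fderiv ℝ φ₁ q (0, v)) z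
            - Jint c₂ γ (fun q => fderiv ℝ φ₂ q (0, v)) z) :=
        Filter.eventuallyEq_of_mem (hU.mem_nhds hz₀) (fun z hz => hpd v z hz)
      rw [heq.fderiv_eq]
      exact hsub _ _ (Dv_contDiffOn hV hφ₁ (0, v)) (Dv_contDiffOn hV hφ₂ (0, v)) z₀ hz₀ v
    -- transfer of the Laplacian from slices to the full space
    have htrans : ∀ (v : ℂ) (w z : ℂ), (w, z) ∈ V →
        fderiv ℝ (fun z' => fderiv ℝ (fun y => G w y) z' v) z v
        = fderiv ℝ (fun p => fderiv ℝ H p ((0:ℂ), v)) (w, z) (0, v) := by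
      intro v w z hq
      have hSopen : IsOpen {z' : ℂ | (w, z') ∈ V} :=
        hV.preimage (Continuous.prodMk_right w)
      have e : (fun z' => fderiv ℝ (fun y => G w y) z' v) =ᶠ[nhds z]
          (fun z' => fderiv ℝ H (w, z') (0, v)) := by
        filter_upwards [hSopen.mem_nhds hq] with z' hz'
        show fderiv ℝ (fun y => H (w, y)) z' v = _
        exact fderiv_slice_snd (hHdiff _ hz') v
      rw [e.fderiv_eq]
      exact fderiv_slice_snd (ψ := fun p => fderiv ℝ H p (0, v))
        (((Dv_contDiffOn hV hsmooth (0, v)).contDiffAt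
          (hV.mem_nhds hq)).differentiableAt (by simp)) v
    -- the Laplacian of H in the second variable vanishes on V
    have hΛ0 : ∀ q ∈ V, fderiv ℝ (fun p => fderiv ℝ H p ((0:ℂ), (1:ℂ))) q (0, 1)
        + fderiv ℝ (fun p => fderiv ℝ H p ((0:ℂ), Complex.I)) q (0, Complex.I) = 0 := by
      rintro ⟨w, z⟩ hq
      have hwΩ : w ∈ Ω := hq.1.1
      have hzΩ : z ∈ Ω := hq.1.2
      have hne : z ∉ ({w} : Set ℂ) := by
        intro h
        exact hq.2 (by simpa using h.symm)
      have h0 := (hharm w hwΩ).2 z ⟨hzΩ, hne⟩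
      have e1 : pdx (pdx (fun z' => G w z')) z
          = fderiv ℝ (fun z' => fderiv ℝ (fun y => G w y) z' 1) z 1 := rfl
      have e2 : pdy (pdy (fun z' => G w z')) z
          = fderiv ℝ (fun z' => fderiv ℝ (fun y => G w y) z' Complex.I) z Complex.I := rfl
      rw [e1, e2, htrans 1 w z hq, htrans Complex.I w z hq] at h0
      exact h0
    -- swapping derivatives: third-order symmetry
    have hvan : ∀ a : ℂ × ℂ, ∀ q ∈ V,
        fderiv ℝ (fun q' => fderiv ℝ (fun p => fderiv ℝ H p a) q' ((0:ℂ), (1:ℂ))) q (0, 1)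
        + fderiv ℝ (fun q' => fderiv ℝ (fun p => fderiv ℝ H p a) q'
            ((0:ℂ), Complex.I)) q (0, Complex.I) = 0 := by
      intro a q hq
      have hswap : ∀ b : ℂ × ℂ,
          fderiv ℝ (fun q' => fderiv ℝ (fun p => fderiv ℝ H p a) q' b) q b
          = fderiv ℝ (fun q' => fderiv ℝ (fun p => fderiv ℝ H p b) q' b) q a := by
        intro b
        have hDb : ContDiffOn ℝ (⊤ : ℕ∞) (fun p => fderiv ℝ H p b) V := Dv_contDiffOn hV hsmooth b
        have e1 : (fun q' => fderiv ℝ (fun p => fderiv ℝ H p a) q' b)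
            =ᶠ[nhds q] (fun q' => fderiv ℝ (fun p => fderiv ℝ H p b) q' a) := by
          filter_upwards [hV.mem_nhds hq] with q' hq' using Dv_swap hV hsmooth hq' b a
        rw [e1.fderiv_eq]
        exact Dv_swap hV hDb hq b a
      rw [hswap ((0:ℂ), (1:ℂ)), hswap ((0:ℂ), Complex.I)]
      have hd1 : DifferentiableAt ℝ
          (fun q' => fderiv ℝ (fun p => fderiv ℝ H p ((0:ℂ), (1:ℂ))) q' ((0:ℂ), (1:ℂ))) q :=
        ((Dv_contDiffOn hV (Dv_contDiffOn hV hsmooth _) _).contDiffAt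
          (hV.mem_nhds hq)).differentiableAt (by simp)
      have hd2 : DifferentiableAt ℝ
          (fun q' => fderiv ℝ (fun p => fderiv ℝ H p ((0:ℂ), Complex.I)) q'
            ((0:ℂ), Complex.I)) q :=
        ((Dv_contDiffOn hV (Dv_contDiffOn hV hsmooth _) _).contDiffAt
          (hV.mem_nhds hq)).differentiableAt (by simp)
      have hadd : fderiv ℝ
            (fun q' => fderiv ℝ (fun p => fderiv ℝ H p ((0:ℂ), (1:ℂ))) q' ((0:ℂ), (1:ℂ))
              + fderiv ℝ (fun p => fderiv ℝ H p ((0:ℂ), Complex.I)) q'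
                ((0:ℂ), Complex.I)) q a
          = fderiv ℝ (fun q' => fderiv ℝ (fun p => fderiv ℝ H p ((0:ℂ), (1:ℂ))) q'
              ((0:ℂ), (1:ℂ))) q a
            + fderiv ℝ (fun q' => fderiv ℝ (fun p => fderiv ℝ H p ((0:ℂ), Complex.I)) q'
              ((0:ℂ), Complex.I)) q a := by
        rw [fderiv_fun_add hd1 hd2]
        rfl
      rw [← hadd]
      have hzero : (fun q' => fderiv ℝ (fun p => fderiv ℝ H p ((0:ℂ), (1:ℂ))) q' ((0:ℂ), (1:ℂ))
          + fderiv ℝ (fun p => fderiv ℝ H p ((0:ℂ), Complex.I)) q' ((0:ℂ), Complex.I))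
          =ᶠ[nhds q] (fun _ => (0:ℝ)) := by
        filter_upwards [hV.mem_nhds hq] with q' hq' using hΛ0 q' hq'
      rw [hzero.fderiv_eq]
      simp
    -- each parametric integral of the Laplacian kernel vanishes
    have key : ∀ (c : ℝ → ℝ), Measurable c →
        (∀ᵐ t ∂(volume.restrict (Set.Ioc (0:ℝ) 1)), |c t| ≤ M) →
        ∀ (φ : ℂ × ℂ → ℝ), ContDiffOn ℝ (⊤ : ℕ∞) φ V →
        (∀ q ∈ V, fderiv ℝ (fun q' => fderiv ℝ φ q' ((0:ℂ), (1:ℂ))) q (0, 1)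
          + fderiv ℝ (fun q' => fderiv ℝ φ q' ((0:ℂ), Complex.I)) q (0, Complex.I) = 0) →
        Jint c γ (fun q => fderiv ℝ (fun q' => fderiv ℝ φ q' ((0:ℂ), (1:ℂ))) q (0, 1)) z₀
        + Jint c γ (fun q => fderiv ℝ (fun q' => fderiv ℝ φ q'
            ((0:ℂ), Complex.I)) q (0, Complex.I)) z₀ = 0 := by
      intro c hc hMc φ hφ hvφ
      have i1 : Integrable (fun t => c t •
          (fun q => fderiv ℝ (fun q' => fderiv ℝ φ q' ((0:ℂ), (1:ℂ))) q (0, 1)) (γ t, z₀))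
          (volume.restrict (Set.Ioc (0:ℝ) 1)) :=
        integrable_J hV hγc hU hUV hc hMc
          (Dv_contDiffOn hV (Dv_contDiffOn hV hφ _) _).continuousOn hz₀
      have i2 : Integrable (fun t => c t •
          (fun q => fderiv ℝ (fun q' => fderiv ℝ φ q' ((0:ℂ), Complex.I)) q
            (0, Complex.I)) (γ t, z₀)) (volume.restrict (Set.Ioc (0:ℝ) 1)) :=
        integrable_J hV hγc hU hUV hc hMc
          (Dv_contDiffOn hV (Dv_contDiffOn hV hφ _) _).continuousOn hz₀
      show (∫ t in Set.Ioc (0:ℝ) 1, _) + (∫ t in Set.Ioc (0:ℝ) 1, _) = 0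
      rw [← MeasureTheory.integral_add i1 i2]
      rw [MeasureTheory.setIntegral_congr_fun measurableSet_Ioc
        (g := fun _ => (0:ℝ)) ?_]
      · simp
      · intro t ht
        have hq := hUV t (Ioc_subset_Icc_self ht) z₀ hz₀
        show c t • _ + c t • _ = (0:ℝ)
        rw [← smul_add, hvφ _ hq, smul_zero]
    -- assemble
    have e1 : pdx (pdx F) z₀ = fderiv ℝ (fun z => fderiv ℝ F z 1) z₀ 1 := rfl
    have e2 : pdy (pdy F) z₀
        = fderiv ℝ (fun z => fderiv ℝ F z Complex.I) z₀ Complex.I := rfl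
    rw [e1, e2, hpd2 1, hpd2 Complex.I]
    have k₁ := key c₁ hc₁ hM₁ φ₁ hφ₁ (hvan (1, 0))
    have k₂ := key c₂ hc₂ hM₂ φ₂ hφ₂ (hvan (Complex.I, 0))
    linarith
end

section
/- Let Ω ⊆ ℂ be a connected open set and let γ : [0,1] → Ω be a piecewise continuously differentiable closed curve. Then there exists a piecewise continuously differentiable closed curve γ̃ : [0,1] → Ω with γ̃(0) = γ(0) = γ(1) = γ̃(1), such that γ̃ is homotopic to γ as loops in Ω, and γ̃ intersects itself at only finitely many points, i.e., the set { x ∈ Ω : x = γ̃(s) = γ̃(t) for some 0 ≤ s < t < 1 } is finite. -/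
open Complex Set

/-- Two closed curves `γ₀, γ₁ : [0,1] → ℂ` with the same base point `γ₀ 0` are homotopic as
loops in `U` if there is a continuous homotopy within `U`, through closed curves fixing the
base point, from `γ₀` to `γ₁`. -/
def LoopHomotopicIn (U : Set ℂ) (γ₀ γ₁ : ℝ → ℂ) : Prop :=
  ∃ F : ℝ × ℝ → ℂ,
    ContinuousOn F (Set.Icc 0 1 ×ˢ Set.Icc 0 1) ∧
    (∀ t ∈ Set.Icc (0:ℝ) 1, F (0, t) = γ₀ t ∧ F (1, t) = γ₁ t) ∧
    (∀ s ∈ Set.Icc (0:ℝ) 1, F (s, 0) = γ₀ 0 ∧ F (s, 1) = γ₀ 0) ∧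
    (∀ q ∈ Set.Icc (0:ℝ) 1 ×ˢ Set.Icc (0:ℝ) 1, F q ∈ U)

noncomputable def crossAux (a b c : ℂ) : ℝ := ((b - a) * (starRingEnd ℂ) (c - a)).im

lemma crossAux_affine (a b z d : ℂ) (t : ℝ) :
    crossAux a b (z + (t : ℂ) * d) = crossAux a b z + t * ((b - a) * (starRingEnd ℂ) d).im := by
  simp [crossAux, Complex.mul_im, Complex.mul_re, Complex.sub_re, Complex.sub_im,
    Complex.add_re, Complex.add_im]
  ring

lemma crossAux_line (o u : ℂ) (μ₁ μ₂ μ₃ : ℝ) :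
    crossAux (o + (μ₁ : ℂ) * u) (o + (μ₂ : ℂ) * u) (o + (μ₃ : ℂ) * u) = 0 := by
  simp [crossAux, Complex.mul_im, Complex.mul_re, Complex.sub_re, Complex.sub_im,
    Complex.add_re, Complex.add_im]
  ring

lemma exists_avoid (c : ℂ) (δ : ℝ) (hδ : 0 < δ) (B : Finset (ℂ × ℂ))
    (hB : ∀ p ∈ B, p.1 ≠ p.2) (P : Finset ℂ) :
    ∃ x : ℂ, dist x c < δ ∧ (∀ p ∈ B, crossAux p.1 p.2 x ≠ 0) ∧ ∀ q ∈ P, x ≠ q := by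
  obtain ⟨s, hs⟩ := Infinite.exists_notMem_finset
    (B.image fun p => (p.2 - p.1).im / (p.2 - p.1).re)
  set d : ℂ := 1 + (s : ℂ) * Complex.I with hd_def
  have hdre : d.re = 1 := by simp [hd_def]
  have hd : d ≠ 0 := fun h => by simp [h] at hdre
  have hslope : ∀ p ∈ B, ((p.2 - p.1) * (starRingEnd ℂ) d).im ≠ 0 := by
    intro p hp
    have hz : p.2 - p.1 ≠ 0 := sub_ne_zero.2 (hB p hp).symm
    have him : ((p.2 - p.1) * (starRingEnd ℂ) d).im
        = (p.2 - p.1).im - s * (p.2 - p.1).re := by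
      simp [hd_def, Complex.mul_im, Complex.mul_re]
      ring
    rw [him]
    by_cases hre : (p.2 - p.1).re = 0
    · have him' : (p.2 - p.1).im ≠ 0 := by
        intro h
        exact hz (Complex.ext hre h)
      rw [hre, mul_zero, sub_zero]
      exact him'
    · intro h
      apply hs
      refine Finset.mem_image.2 ⟨p, hp, ?_⟩
      rw [div_eq_iff hre]
      linarith
  have hr : 0 < δ / ‖d‖ := div_pos hδ (norm_pos_iff.2 hd)
  set T : Finset ℝ := (B.image fun p => - crossAux p.1 p.2 c / ((p.2 - p.1) * (starRingEnd ℂ) d).im)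
      ∪ P.image (fun q => ((q - c) / d).re) with hT_def
  obtain ⟨t, ht⟩ : ∃ t, t ∈ Set.Ioo (0:ℝ) (δ / ‖d‖) \ (T : Set ℝ) :=
    ((Set.Ioo_infinite hr).diff (T.finite_toSet)).nonempty
  obtain ⟨⟨ht0, htr⟩, htT⟩ := ht
  refine ⟨c + (t : ℂ) * d, ?_, ?_, ?_⟩
  · have : dist (c + (t : ℂ) * d) c = ‖(t : ℂ) * d‖ := by
      simp [Complex.dist_eq]
    rw [this, norm_mul, Complex.norm_real, Real.norm_eq_abs, abs_of_pos ht0]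
    calc t * ‖d‖ < (δ / ‖d‖) * ‖d‖ := by
          exact mul_lt_mul_of_pos_right htr (norm_pos_iff.2 hd)
      _ = δ := div_mul_cancel₀ δ (ne_of_gt (norm_pos_iff.2 hd))
  · intro p hp h
    rw [crossAux_affine] at h
    apply htT
    refine Finset.mem_coe.2 (Finset.mem_union_left _ (Finset.mem_image.2 ⟨p, hp, ?_⟩))
    have hsl := hslope p hp
    rw [div_eq_iff hsl]
    linarith
  · intro q hq h
    apply htT
    refine Finset.mem_coe.2 (Finset.mem_union_right _ (Finset.mem_image.2 ⟨q, hq, ?_⟩))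
    have h1 : (t : ℂ) * d = q - c := by rw [← h]; ring
    have h2 : ((q - c) / d) = (t : ℂ) := by rw [← h1]; field_simp
    rw [h2]
    simp

lemma exists_vertices (f : ℕ → ℂ) (δ : ℝ) (hδ : 0 < δ) (m : ℕ) :
    ∃ w : ℕ → ℂ, w 0 = f 0 ∧ (∀ j, j < m → dist (w j) (f j) < δ) ∧
      (∀ a b, a < b → b < m → w a ≠ w b) ∧
      (∀ a b c, a < b → b < c → c < m → crossAux (w a) (w b) (w c) ≠ 0) := by
  induction m with
  | zero => exact ⟨f, rfl, by omega, by omega, by omega⟩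
  | succ m ih =>
    rcases Nat.eq_zero_or_pos m with hm | hm
    · subst hm
      refine ⟨f, rfl, ?_, by omega, by omega⟩
      intro j hj
      interval_cases j
      simpa using hδ
    · obtain ⟨w, hw0, hwd, hwne, hwc⟩ := ih
      set B : Finset (ℂ × ℂ) :=
        ((Finset.range m ×ˢ Finset.range m).filter fun p => p.1 < p.2).image
          fun p => (w p.1, w p.2) with hB_def
      have hB : ∀ p ∈ B, p.1 ≠ p.2 := by
        intro p hp
        obtain ⟨q, hq, rfl⟩ := Finset.mem_image.1 hp
        simp only [Finset.mem_filter, Finset.mem_product, Finset.mem_range] at hq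
        exact hwne q.1 q.2 hq.2 hq.1.2
      obtain ⟨x, hx1, hx2, hx3⟩ := exists_avoid (f m) δ hδ B hB ((Finset.range m).image w)
      refine ⟨Function.update w m x, ?_, ?_, ?_, ?_⟩
      · rw [Function.update_of_ne (by omega)]; exact hw0
      · intro j hj
        rcases Nat.lt_or_ge j m with h | h
        · rw [Function.update_of_ne (by omega)]; exact hwd j h
        · have : j = m := by omega
          subst this
          rw [Function.update_self]; exact hx1
      · intro a b hab hb
        rcases Nat.lt_or_ge b m with h | h
        · rw [Function.update_of_ne (by omega), Function.update_of_ne (by omega)]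
          exact hwne a b hab h
        · have : b = m := by omega
          subst this
          rw [Function.update_of_ne (by omega), Function.update_self]
          exact fun h' => hx3 (w a) (Finset.mem_image.2 ⟨a, Finset.mem_range.2 hab, rfl⟩) h'.symm
      · intro a b c hab hbc hc
        rcases Nat.lt_or_ge c m with h | h
        · rw [Function.update_of_ne (by omega), Function.update_of_ne (by omega),
            Function.update_of_ne (by omega)]
          exact hwc a b c hab hbc h
        · have : c = m := by omega
          subst this
          rw [Function.update_of_ne (by omega), Function.update_of_ne (by omega),
            Function.update_self]
          exact hx2 (w a, w b) (Finset.mem_image.2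
            ⟨(a, b), by simp [Finset.mem_filter, Finset.mem_product]; omega, rfl⟩)

lemma continuousOn_union_closed {f : ℝ → ℂ} {s t : Set ℝ} (hs : IsClosed s) (ht : IsClosed t)
    (hfs : ContinuousOn f s) (hft : ContinuousOn f t) : ContinuousOn f (s ∪ t) := by
  intro x hx
  rcases hx with hxs | hxt
  · by_cases hxt : x ∈ t
    · exact (hfs x hxs).union (hft x hxt)
    · refine (hfs x hxs).union (continuousWithinAt_of_notMem_closure ?_)
      rwa [ht.closure_eq]
  · by_cases hxs : x ∈ s
    · exact (hfs x hxs).union (hft x hxt)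
    · refine (continuousWithinAt_of_notMem_closure ?_).union (hft x hxt)
      rwa [hs.closure_eq]

lemma continuousOn_biUnion_closed {f : ℝ → ℂ} {n : ℕ} {S : ℕ → Set ℝ}
    (hcl : ∀ i, IsClosed (S i)) (h : ∀ i < n, ContinuousOn f (S i)) :
    ContinuousOn f (⋃ i ∈ Finset.range n, S i) := by
  induction n with
  | zero => simp
  | succ n ih =>
    rw [Finset.range_add_one]
    simp only [Finset.mem_insert, Set.iUnion_iUnion_eq_or_left]
    exact continuousOn_union_closed (hcl n)
      (isClosed_biUnion_finset fun i _ => hcl i)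
      (h n (by omega))
      (ih fun i hi => h i (by omega))

lemma sort3 {P : ℕ → Prop} {n a b c : ℕ} (ha : a < n) (hb : b < n) (hc : c < n)
    (hab : a ≠ b) (hac : a ≠ c) (hbc : b ≠ c) (Pa : P a) (Pb : P b) (Pc : P c) :
    ∃ x y z, x < y ∧ y < z ∧ z < n ∧ P x ∧ P y ∧ P z := by
  rcases Nat.lt_or_ge a b with h1 | h1
  · rcases Nat.lt_or_ge b c with h2 | h2
    · exact ⟨a, b, c, h1, h2, hc, Pa, Pb, Pc⟩
    · rcases Nat.lt_or_ge a c with h3 | h3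
      · exact ⟨a, c, b, h3, by omega, hb, Pa, Pc, Pb⟩
      · exact ⟨c, a, b, by omega, h1, hb, Pc, Pa, Pb⟩
  · rcases Nat.lt_or_ge a c with h2 | h2
    · exact ⟨b, a, c, by omega, h2, hc, Pb, Pa, Pc⟩
    · rcases Nat.lt_or_ge b c with h3 | h3
      · exact ⟨b, c, a, h3, by omega, ha, Pb, Pc, Pa⟩
      · exact ⟨c, b, a, by omega, by omega, ha, Pc, Pb, Pa⟩

set_option maxHeartbeats 2000000 in
/-- Every piecewise `C¹` closed curve in a connected open set `Ω ⊆ ℂ` is homotopic, as a loop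
in `Ω`, to a piecewise `C¹` closed curve with the same base point which intersects itself at
only finitely many points. -/
theorem exists_homotopic_curve_with_finite_self_intersections
    (Ω : Set ℂ) (hΩ : IsOpen Ω) (hconn : IsConnected Ω)
    (γ : ℝ → ℂ) (hγ : PiecewiseC1 γ) (hγΩ : ∀ t ∈ Set.Icc (0:ℝ) 1, γ t ∈ Ω)
    (hclosed : γ 0 = γ 1) :
    ∃ γ' : ℝ → ℂ,
      PiecewiseC1 γ' ∧ (∀ t ∈ Set.Icc (0:ℝ) 1, γ' t ∈ Ω) ∧
      γ' 0 = γ 0 ∧ γ' 1 = γ 1 ∧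
      LoopHomotopicIn Ω γ γ' ∧
      Set.Finite {x : ℂ | ∃ s t : ℝ, 0 ≤ s ∧ s < t ∧ t < 1 ∧ γ' s = x ∧ γ' t = x} := by
  obtain ⟨hγc, -⟩ := hγ
  -- a safety margin around the image of γ
  have hK : IsCompact (γ '' Icc 0 1) := (isCompact_Icc).image_of_continuousOn hγc
  have hKΩ : γ '' Icc 0 1 ⊆ Ω := by rintro _ ⟨t, ht, rfl⟩; exact hγΩ t ht
  obtain ⟨ε, hε, hthick⟩ := hK.exists_thickening_subset_open hΩ hKΩ
  have hmem : ∀ z : ℂ, ∀ t ∈ Icc (0:ℝ) 1, dist z (γ t) < ε → z ∈ Ω := by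
    intro z t ht hzt
    exact hthick (Metric.mem_thickening_iff.2 ⟨γ t, ⟨t, ht, rfl⟩, hzt⟩)
  -- uniform continuity
  have huc := (isCompact_Icc : IsCompact (Icc (0:ℝ) 1)).uniformContinuousOn_of_continuous hγc
  rw [Metric.uniformContinuousOn_iff] at huc
  obtain ⟨η, hη, hucη⟩ := huc (ε/4) (by positivity)
  -- choice of n
  obtain ⟨n, hnn⟩ := exists_nat_gt (max 2 (1/η))
  have hn3 : 3 ≤ n := by
    have h2 : (2:ℝ) < n := lt_of_le_of_lt (le_max_left _ _) hnn
    have h3 : (2:ℕ) < n := by exact_mod_cast h2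
    omega
  have hn0 : (0:ℝ) < n := by positivity
  have hinv : 1/(n:ℝ) < η := by
    have h1 : 1 / η < (n:ℝ) := lt_of_le_of_lt (le_max_right _ _) hnn
    have h2 : 1 < (n:ℝ) * η := (div_lt_iff₀ hη).1 h1
    rw [div_lt_iff₀ hn0]
    linarith
  set δ := ε/4 with hδ_def
  obtain ⟨w, hw0, hwd, hwne, hwc⟩ :=
    exists_vertices (fun k => γ ((k:ℝ)/n)) δ (by positivity) n
  set W : ℕ → ℂ := fun k => if k < n then w k else w 0 with hW_def
  have hWlt : ∀ k, k < n → W k = w k := by intro k hk; simp [hW_def, hk]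
  have hWn : W n = W 0 := by simp [hW_def]
  have hW0γ : W 0 = γ 0 := by
    have : W 0 = w 0 := by simp [hW_def]
    rw [this, hw0]
    norm_num
  have happrox : ∀ j, j ≤ n → dist (W j) (γ ((j:ℝ)/n)) < δ := by
    intro j hj
    rcases Nat.lt_or_ge j n with h | h
    · rw [hWlt j h]; exact hwd j h
    · have hjn : j = n := by omega
      rw [hjn, hWn, hW0γ]
      have : ((n:ℝ))/n = 1 := div_self (ne_of_gt hn0)
      rw [this, ← hclosed]
      simpa using (by positivity : (0:ℝ) < δ)
  have hWne' : ∀ a b, a < b → b < n → W a ≠ W b := by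
    intro a b hab hb
    rw [hWlt a (by omega), hWlt b hb]
    exact hwne a b hab hb
  have hWc : ∀ a b c, a < b → b < c → c < n → crossAux (W a) (W b) (W c) ≠ 0 := by
    intro a b c hab hbc hc
    rw [hWlt a (by omega), hWlt b (by omega), hWlt c hc]
    exact hwc a b c hab hbc hc
  have hWadj : ∀ j, j < n → W j ≠ W (j+1) := by
    intro j hj
    rcases Nat.lt_or_ge (j+1) n with h | h
    · exact hWne' j (j+1) (by omega) h
    · have hj1 : j + 1 = n := by omega
      rw [hj1, hWn]
      exact fun h' => hWne' 0 j (by omega) hj h'.symm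
  -- the polygonal curve
  set γ' : ℝ → ℂ := fun t =>
    W ⌊(n:ℝ)*t⌋₊ + (((n:ℝ)*t - (⌊(n:ℝ)*t⌋₊ : ℕ) : ℝ) : ℂ) *
      (W (⌊(n:ℝ)*t⌋₊ + 1) - W ⌊(n:ℝ)*t⌋₊) with hγ'def
  -- value on each subinterval
  have hval : ∀ j : ℕ, j < n → ∀ t ∈ Icc ((j:ℝ)/n) (((j:ℝ)+1)/n),
      γ' t = W j + (((n:ℝ)*t - j : ℝ) : ℂ) * (W (j+1) - W j) := by
    intro j hj t ht
    obtain ⟨h1, h2⟩ := ht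
    have hnt0 : 0 ≤ (n:ℝ)*t := by
      have : (0:ℝ) ≤ (j:ℝ)/n := by positivity
      nlinarith [le_trans this h1]
    rcases lt_or_eq_of_le h2 with h2 | h2
    · have hfl : ⌊(n:ℝ)*t⌋₊ = j := by
        rw [Nat.floor_eq_iff hnt0]
        constructor
        · have := (div_le_iff₀ hn0).1 h1; linarith
        · have := (lt_div_iff₀ hn0).1 h2; push_cast; linarith
      simp only [hγ'def, hfl]
    · have hnt : (n:ℝ)*t = (j:ℝ)+1 := by
        rw [h2]; field_simp
      have hfl : ⌊(n:ℝ)*t⌋₊ = j+1 := by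
        rw [hnt, show ((j:ℝ)+1) = ((j+1:ℕ):ℝ) by push_cast; ring]
        exact Nat.floor_natCast _
      simp only [hγ'def]
      rw [hfl, hnt]
      push_cast
      ring
  -- covering of [0,1]
  have hcover : ∀ t ∈ Icc (0:ℝ) 1, ∃ j, j < n ∧ t ∈ Icc ((j:ℝ)/n) (((j:ℝ)+1)/n) := by
    intro t ht
    obtain ⟨ht0, ht1⟩ := ht
    have hnt0 : 0 ≤ (n:ℝ)*t := by positivity
    rcases Nat.lt_or_ge ⌊(n:ℝ)*t⌋₊ n with h | h
    · refine ⟨⌊(n:ℝ)*t⌋₊, h, ?_, ?_⟩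
      · rw [div_le_iff₀ hn0]
        have := Nat.floor_le hnt0
        linarith
      · rw [le_div_iff₀ hn0]
        have := (Nat.lt_floor_add_one ((n:ℝ)*t)).le
        linarith
    · have h' : (n:ℝ) ≤ (n:ℝ)*t := by
        have := (Nat.le_floor_iff hnt0).1 h
        exact_mod_cast this
      refine ⟨n-1, by omega, ?_, ?_⟩
      · have hcast : ((n-1:ℕ):ℝ) = (n:ℝ) - 1 := by
          have h1 : 1 ≤ n := by omega
          push_cast [h1]
          ring
        rw [hcast, div_le_iff₀ hn0]
        nlinarith
      · have hcast : ((n-1:ℕ):ℝ) = (n:ℝ) - 1 := by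
          have h1 : 1 ≤ n := by omega
          push_cast [h1]
          ring
        rw [hcast, le_div_iff₀ hn0]
        nlinarith
  -- the pieces are C¹
  have hpiece : ∀ j, j < n → ContDiffOn ℝ 1 γ' (Icc ((j:ℝ)/n) (((j:ℝ)+1)/n)) := by
    intro j hj
    have hg : ContDiff ℝ 1 (fun t : ℝ => W j + (((n:ℝ)*t - j : ℝ) : ℂ) * (W (j+1) - W j)) := by
      apply ContDiff.add contDiff_const
      apply ContDiff.mul _ contDiff_const
      exact Complex.ofRealCLM.contDiff.comp
        (((contDiff_const).mul contDiff_id).sub contDiff_const)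
    exact hg.contDiffOn.congr (fun t ht => hval j hj t ht)
  -- continuity
  have hcont : ContinuousOn γ' (Icc 0 1) := by
    have hbig : ContinuousOn γ'
        (⋃ j ∈ Finset.range n, Icc ((j:ℝ)/n) (((j:ℝ)+1)/n)) :=
      continuousOn_biUnion_closed (fun i => isClosed_Icc)
        (fun j hj => (hpiece j hj).continuousOn)
    refine hbig.mono ?_
    intro t ht
    obtain ⟨j, hj, htj⟩ := hcover t ht
    exact Set.mem_biUnion (Finset.mem_range.2 hj) htj
  -- endpoints
  have hend0 : γ' 0 = γ 0 := by
    have : γ' 0 = W 0 := by simp [hγ'def]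
    rw [this, hW0γ]
  have hend1 : γ' 1 = γ 1 := by
    have : γ' 1 = W n := by simp [hγ'def]
    rw [this, hWn, hW0γ, hclosed]
  -- approximation
  have happ2 : ∀ t ∈ Icc (0:ℝ) 1, dist (γ' t) (γ t) < ε := by
    intro t ht
    obtain ⟨j, hj, htj⟩ := hcover t ht
    obtain ⟨h1, h2⟩ := htj
    set θ : ℝ := (n:ℝ)*t - j with hθ_def
    have hθ0 : 0 ≤ θ := by
      have := (div_le_iff₀ hn0).1 h1
      simp only [hθ_def]
      linarith
    have hθ1 : θ ≤ 1 := by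
      have := (le_div_iff₀ hn0).1 h2
      simp only [hθ_def]
      linarith
    have hjn : (j:ℝ)/n ∈ Icc (0:ℝ) 1 := by
      constructor
      · positivity
      · rw [div_le_one hn0]
        exact_mod_cast Nat.cast_le.2 hj.le
    have hj1n : ((j:ℝ)+1)/n ∈ Icc (0:ℝ) 1 := by
      constructor
      · positivity
      · rw [div_le_one hn0]
        have : (j:ℝ)+1 ≤ n := by exact_mod_cast Nat.succ_le_of_lt hj
        linarith
    have hd1 : dist ((j:ℝ)/n) t < η := by
      rw [Real.dist_eq, _root_.abs_of_nonpos (by linarith)]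
      have hgap : ((j:ℝ)+1)/n - (j:ℝ)/n = 1/n := by field_simp; ring
      linarith
    have hd2 : dist (((j:ℝ)+1)/n) t < η := by
      rw [Real.dist_eq, _root_.abs_of_nonneg (by linarith)]
      have hgap : ((j:ℝ)+1)/n - (j:ℝ)/n = 1/n := by field_simp; ring
      linarith
    have hb1 : ‖W j - γ t‖ < ε/2 := by
      have e1 : ‖W j - γ t‖ ≤ dist (W j) (γ ((j:ℝ)/n)) + dist (γ ((j:ℝ)/n)) (γ t) := by
        rw [← dist_eq_norm]
        exact dist_triangle _ _ _
      have e2 := happrox j hj.le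
      have e3 := hucη ((j:ℝ)/n) hjn t ht hd1
      rw [hδ_def] at e2 e3
      linarith
    have hb2 : ‖W (j+1) - γ t‖ < ε/2 := by
      have e1 : ‖W (j+1) - γ t‖ ≤ dist (W (j+1)) (γ (((j:ℝ)+1)/n)) +
          dist (γ (((j:ℝ)+1)/n)) (γ t) := by
        rw [← dist_eq_norm]
        exact dist_triangle _ _ _
      have e2 := happrox (j+1) (Nat.succ_le_of_lt hj)
      have ecast : ((j+1:ℕ):ℝ) = (j:ℝ)+1 := by push_cast; ring
      rw [ecast] at e2
      have e3 := hucη (((j:ℝ)+1)/n) hj1n t ht hd2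
      rw [hδ_def] at e2 e3
      linarith
    have hsplit : γ' t - γ t = ((1-θ : ℝ):ℂ) * (W j - γ t) + ((θ:ℝ):ℂ) * (W (j+1) - γ t) := by
      rw [hval j hj t ⟨h1, h2⟩]
      simp only [hθ_def]
      push_cast
      ring
    rw [dist_eq_norm, hsplit]
    calc ‖((1-θ : ℝ):ℂ) * (W j - γ t) + ((θ:ℝ):ℂ) * (W (j+1) - γ t)‖
        ≤ ‖((1-θ : ℝ):ℂ) * (W j - γ t)‖ + ‖((θ:ℝ):ℂ) * (W (j+1) - γ t)‖ := norm_add_le _ _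
      _ = (1-θ) * ‖W j - γ t‖ + θ * ‖W (j+1) - γ t‖ := by
          rw [norm_mul, norm_mul, Complex.norm_real, Complex.norm_real,
            Real.norm_eq_abs, Real.norm_eq_abs, _root_.abs_of_nonneg (by linarith),
            _root_.abs_of_nonneg hθ0]
      _ < ε := by nlinarith [norm_nonneg (W j - γ t), norm_nonneg (W (j+1) - γ t)]
  have hγ'Ω : ∀ t ∈ Icc (0:ℝ) 1, γ' t ∈ Ω := fun t ht => hmem _ t ht (happ2 t ht)
  -- piecewise C¹
  have hpw : PiecewiseC1 γ' := by
    refine ⟨hcont, n, fun j => (j:ℝ)/n, by norm_num, div_self (ne_of_gt hn0), ?_, ?_⟩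
    · intro j hj
      rw [div_lt_div_iff₀ hn0 hn0]
      have hlt : (j:ℝ) < ((j+1:ℕ):ℝ) := by push_cast; linarith
      nlinarith
    · intro j hj
      show ContDiffOn ℝ 1 γ' (Icc ((j:ℝ)/n) (((j+1:ℕ):ℝ)/n))
      have hcast : ((j+1:ℕ):ℝ) = (j:ℝ)+1 := by push_cast; ring
      rw [hcast]
      exact hpiece j hj
  -- homotopy
  have hhom : LoopHomotopicIn Ω γ γ' := by
    refine ⟨fun q => (1 - (q.1:ℂ)) * γ q.2 + (q.1:ℂ) * γ' q.2, ?_, ?_, ?_, ?_⟩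
    · have hγs : ContinuousOn (fun q : ℝ×ℝ => γ q.2) (Icc 0 1 ×ˢ Icc 0 1) :=
        hγc.comp continuous_snd.continuousOn (fun q hq => hq.2)
      have hγ's : ContinuousOn (fun q : ℝ×ℝ => γ' q.2) (Icc 0 1 ×ˢ Icc 0 1) :=
        hcont.comp continuous_snd.continuousOn (fun q hq => hq.2)
      exact (((continuous_const.sub
        (Complex.continuous_ofReal.comp continuous_fst)).continuousOn.mul hγs).add
        ((Complex.continuous_ofReal.comp continuous_fst).continuousOn.mul hγ's))
    · intro t ht
      constructor <;> simp
    · intro s hs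
      constructor
      · show (1 - ((s:ℝ):ℂ)) * γ 0 + ((s:ℝ):ℂ) * γ' 0 = γ 0
        rw [hend0]
        ring
      · show (1 - ((s:ℝ):ℂ)) * γ 1 + ((s:ℝ):ℂ) * γ' 1 = γ 0
        rw [hend1, ← hclosed]
        ring
    · rintro ⟨u, t⟩ ⟨hu, ht⟩
      apply hmem _ t ht
      have hsp : (1 - (u:ℂ)) * γ t + (u:ℂ) * γ' t - γ t = (u:ℂ) * (γ' t - γ t) := by ring
      rw [dist_eq_norm, hsp, norm_mul, Complex.norm_real, Real.norm_eq_abs,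
        _root_.abs_of_nonneg hu.1]
      calc u * ‖γ' t - γ t‖ ≤ 1 * ‖γ' t - γ t‖ :=
            mul_le_mul_of_nonneg_right hu.2 (norm_nonneg _)
        _ = ‖γ' t - γ t‖ := one_mul _
        _ < ε := by rw [← dist_eq_norm]; exact happ2 t ht
  -- the segments
  set Sseg : ℕ → Set ℂ := fun j =>
    {x : ℂ | ∃ θ : ℝ, 0 ≤ θ ∧ θ ≤ 1 ∧ x = W j + ((θ:ℝ):ℂ) * (W (j+1) - W j)} with hSseg_def
  have hsub : ∀ i j, i < n → j < n → i ≠ j → (Sseg i ∩ Sseg j).Subsingleton := by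
    intro i j hi hj hij x hx y hy
    by_contra hxy
    obtain ⟨⟨a, ha0, ha1, hxa⟩, ⟨b, hb0, hb1, hxb⟩⟩ := hx
    obtain ⟨⟨a', ha'0, ha'1, hya⟩, ⟨b', hb'0, hb'1, hyb⟩⟩ := hy
    have hu : W (i+1) - W i ≠ 0 := sub_ne_zero.2 (hWadj i hi).symm
    have hv : W (j+1) - W j ≠ 0 := sub_ne_zero.2 (hWadj j hj).symm
    have hyx1 : y - x = ((a' - a : ℝ) : ℂ) * (W (i+1) - W i) := by
      rw [hxa, hya]; push_cast; ring
    have hyx2 : y - x = ((b' - b : ℝ) : ℂ) * (W (j+1) - W j) := by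
      rw [hxb, hyb]; push_cast; ring
    have hba : (b' - b : ℝ) ≠ 0 := by
      intro h
      apply hxy
      have h0 : y - x = 0 := by rw [hyx2, h]; simp
      exact (sub_eq_zero.1 h0).symm
    set μ : ℝ := (a'-a)/(b'-b) with hμ_def
    have hbc : ((b':ℂ) - (b:ℂ)) ≠ 0 := by
      have := Complex.ofReal_ne_zero.2 hba
      push_cast at this
      exact this
    have hvu : W (j+1) - W j = ((μ:ℝ):ℂ) * (W (i+1) - W i) := by
      have h3 : ((a' - a :ℝ):ℂ) * (W (i+1) - W i) = ((b' - b:ℝ):ℂ) * (W (j+1) - W j) := by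
        rw [← hyx1, hyx2]
      push_cast at h3
      rw [eq_comm, hμ_def]
      push_cast
      rw [div_mul_eq_mul_div, div_eq_iff hbc]
      linear_combination h3
    have hWj : W j = W i + ((a - b*μ : ℝ):ℂ) * (W (i+1) - W i) := by
      have h4 : W j = x - ((b:ℝ):ℂ) * (W (j+1) - W j) := by rw [hxb]; ring
      rw [h4, hvu, hxa]
      push_cast
      ring
    have hWj1 : W (j+1) = W i + ((a - b*μ + μ : ℝ):ℂ) * (W (i+1) - W i) := by
      have h5 : W (j+1) = W j + (W (j+1) - W j) := by ring
      rw [h5, hvu, hWj]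
      push_cast
      ring
    obtain ⟨c1, hc1n, hc1w, hc1a⟩ : ∃ c, c < n ∧ W c = W (i+1) ∧
        ((i+1 = n ∧ c = 0) ∨ (i+1 < n ∧ c = i+1)) := by
      rcases Nat.lt_or_ge (i+1) n with h | h
      · exact ⟨i+1, h, rfl, Or.inr ⟨h, rfl⟩⟩
      · have he : i + 1 = n := by omega
        refine ⟨0, by omega, ?_, Or.inl ⟨he, rfl⟩⟩
        rw [he]
        exact hWn.symm
    obtain ⟨c2, hc2n, hc2w, hc2a⟩ : ∃ c, c < n ∧ W c = W (j+1) ∧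
        ((j+1 = n ∧ c = 0) ∨ (j+1 < n ∧ c = j+1)) := by
      rcases Nat.lt_or_ge (j+1) n with h | h
      · exact ⟨j+1, h, rfl, Or.inr ⟨h, rfl⟩⟩
      · have he : j + 1 = n := by omega
        refine ⟨0, by omega, ?_, Or.inl ⟨he, rfl⟩⟩
        rw [he]
        exact hWn.symm
    have Pi : ∃ μk : ℝ, W i = W i + ((μk:ℝ):ℂ) * (W (i+1) - W i) := ⟨0, by simp⟩
    have Pc1 : ∃ μk : ℝ, W c1 = W i + ((μk:ℝ):ℂ) * (W (i+1) - W i) :=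
      ⟨1, by rw [hc1w]; push_cast; ring⟩
    have Pj : ∃ μk : ℝ, W j = W i + ((μk:ℝ):ℂ) * (W (i+1) - W i) := ⟨a - b*μ, hWj⟩
    have Pc2 : ∃ μk : ℝ, W c2 = W i + ((μk:ℝ):ℂ) * (W (i+1) - W i) :=
      ⟨a - b*μ + μ, by rw [hc2w]; exact hWj1⟩
    have hfinal : ∀ x' y' z' : ℕ, x' < y' → y' < z' → z' < n →
        (∃ μk : ℝ, W x' = W i + ((μk:ℝ):ℂ) * (W (i+1) - W i)) →
        (∃ μk : ℝ, W y' = W i + ((μk:ℝ):ℂ) * (W (i+1) - W i)) →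
        (∃ μk : ℝ, W z' = W i + ((μk:ℝ):ℂ) * (W (i+1) - W i)) → False := by
      rintro x' y' z' h1 h2 h3 ⟨μ1, e1⟩ ⟨μ2, e2⟩ ⟨μ3, e3⟩
      exact hWc x' y' z' h1 h2 h3 (by rw [e1, e2, e3]; exact crossAux_line _ _ _ _ _)
    have hc1i : c1 ≠ i := by omega
    by_cases hc1j : c1 = j
    · have hc2i : c2 ≠ i := by omega
      have hc2j : c2 ≠ j := by omega
      obtain ⟨x', y', z', h1, h2, h3, p1, p2, p3⟩ :=
        sort3 (P := fun k => ∃ μk : ℝ, W k = W i + ((μk:ℝ):ℂ) * (W (i+1) - W i))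
          hi hj hc2n hij (fun h => hc2i h.symm) (fun h => hc2j h.symm) Pi Pj Pc2
      exact hfinal x' y' z' h1 h2 h3 p1 p2 p3
    · obtain ⟨x', y', z', h1, h2, h3, p1, p2, p3⟩ :=
        sort3 (P := fun k => ∃ μk : ℝ, W k = W i + ((μk:ℝ):ℂ) * (W (i+1) - W i))
          hi hc1n hj (fun h => hc1i h.symm) hij hc1j Pi Pc1 Pj
      exact hfinal x' y' z' h1 h2 h3 p1 p2 p3
  -- self-intersections lie in pairwise segment intersections
  have hXsub : {x : ℂ | ∃ s t : ℝ, 0 ≤ s ∧ s < t ∧ t < 1 ∧ γ' s = x ∧ γ' t = x} ⊆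
      ⋃ p ∈ ((Finset.range n ×ˢ Finset.range n).filter fun p : ℕ×ℕ => p.1 ≠ p.2),
        (Sseg p.1 ∩ Sseg p.2) := by
    rintro x ⟨s, t, hs0, hst, ht1, hxs, hxt⟩
    have hs1 : s < 1 := hst.trans ht1
    have ht0 : 0 ≤ t := le_trans hs0 hst.le
    have hns0 : 0 ≤ (n:ℝ)*s := by positivity
    have hnt0 : 0 ≤ (n:ℝ)*t := by positivity
    have hi : ⌊(n:ℝ)*s⌋₊ < n := by
      rw [Nat.floor_lt hns0]
      nlinarith
    have hj : ⌊(n:ℝ)*t⌋₊ < n := by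
      rw [Nat.floor_lt hnt0]
      nlinarith
    have hmi : x ∈ Sseg ⌊(n:ℝ)*s⌋₊ := by
      refine ⟨(n:ℝ)*s - ⌊(n:ℝ)*s⌋₊, ?_, ?_, ?_⟩
      · have := Nat.floor_le hns0; linarith
      · have := (Nat.lt_floor_add_one ((n:ℝ)*s)).le; linarith
      · rw [← hxs]
    have hmj : x ∈ Sseg ⌊(n:ℝ)*t⌋₊ := by
      refine ⟨(n:ℝ)*t - ⌊(n:ℝ)*t⌋₊, ?_, ?_, ?_⟩
      · have := Nat.floor_le hnt0; linarith
      · have := (Nat.lt_floor_add_one ((n:ℝ)*t)).le; linarith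
      · rw [← hxt]
    have hijne : ⌊(n:ℝ)*s⌋₊ ≠ ⌊(n:ℝ)*t⌋₊ := by
      intro h
      have h1 : γ' s = W ⌊(n:ℝ)*s⌋₊ + (((n:ℝ)*s - ⌊(n:ℝ)*s⌋₊ : ℝ):ℂ) *
          (W (⌊(n:ℝ)*s⌋₊+1) - W ⌊(n:ℝ)*s⌋₊) := by simp only [hγ'def]
      have h2 : γ' t = W ⌊(n:ℝ)*s⌋₊ + (((n:ℝ)*t - ⌊(n:ℝ)*s⌋₊ : ℝ):ℂ) *
          (W (⌊(n:ℝ)*s⌋₊+1) - W ⌊(n:ℝ)*s⌋₊) := by simp only [hγ'def]; rw [← h]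
      have heq : γ' s = γ' t := by rw [hxs, hxt]
      rw [h1, h2] at heq
      have hu : W (⌊(n:ℝ)*s⌋₊+1) - W ⌊(n:ℝ)*s⌋₊ ≠ 0 :=
        sub_ne_zero.2 (hWadj _ hi).symm
      have heq2 : (((n:ℝ)*s - ⌊(n:ℝ)*s⌋₊ : ℝ):ℂ) = (((n:ℝ)*t - ⌊(n:ℝ)*s⌋₊ : ℝ):ℂ) :=
        mul_right_cancel₀ hu (add_left_cancel heq)
      have heq3 : (n:ℝ)*s - ⌊(n:ℝ)*s⌋₊ = (n:ℝ)*t - ⌊(n:ℝ)*s⌋₊ := by exact_mod_cast heq2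
      have hsteq : s = t := by
        have h4 : (n:ℝ)*s = (n:ℝ)*t := by linarith
        exact mul_left_cancel₀ (ne_of_gt hn0) h4
      exact absurd hsteq (ne_of_lt hst)
    exact Set.mem_iUnion₂.2 ⟨(⌊(n:ℝ)*s⌋₊, ⌊(n:ℝ)*t⌋₊),
      by simp only [Finset.mem_filter, Finset.mem_product, Finset.mem_range]
         exact ⟨⟨hi, hj⟩, hijne⟩,
      ⟨hmi, hmj⟩⟩
  have hfin1 : Set.Finite (⋃ p ∈ ((Finset.range n ×ˢ Finset.range n).filter
      fun p : ℕ×ℕ => p.1 ≠ p.2), (Sseg p.1 ∩ Sseg p.2)) := by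
    apply Set.Finite.biUnion (Finset.finite_toSet _)
    intro p hp
    simp only [Finset.mem_coe, Finset.mem_filter, Finset.mem_product, Finset.mem_range] at hp
    exact Set.Subsingleton.finite (hsub p.1 p.2 hp.1.1 hp.1.2 hp.2)
  exact ⟨γ', hpw, hγ'Ω, hend0, hend1, hhom, Set.Finite.subset hfin1 hXsub⟩
end

section
/- Let U ⊆ ℂ be a connected open set, let z₀ ∈ U, and let (u_k)_{k ∈ ℕ} be a sequence of harmonic functions on U with u_k(z) ≤ 0 for all z ∈ U and all k, such that u_k(z₀) → 0 as k → ∞. Then for every compact set K ⊆ U, both sup_{z ∈ K} |u_k(z)| → 0 and sup_{z ∈ K} |∇u_k(z)| → 0 as k → ∞, where ∇u_k = (∂u_k/∂x, ∂u_k/∂y) is the gradient. -/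
open Complex Set Filter

open Metric

lemma harmonic_grad_hasDeriv {u : ℂ → ℝ} {U : Set ℂ} (hU : IsOpen U) (h : IsHarmonicOn u U)
    {z : ℂ} (hz : z ∈ U) :
    DifferentiableAt ℂ (fun w => (pdx u w : ℂ) - Complex.I * (pdy u w : ℂ)) z := by
  obtain ⟨hC2, hlap⟩ := h
  have hud : ∀ᶠ w in nhds z, HasFDerivAt u (fderiv ℝ u w) w := by
    filter_upwards [hU.mem_nhds hz] with w hw
    exact ((hC2.differentiableOn (by norm_num)).differentiableAt (hU.mem_nhds hw)).hasFDerivAt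
  have hfd : DifferentiableOn ℝ (fderiv ℝ u) U :=
    (hC2.fderiv_of_isOpen hU (by norm_num : (1:WithTop ℕ∞) + 1 ≤ 2)).differentiableOn one_ne_zero
  set B := fderiv ℝ (fderiv ℝ u) z with hB
  have hBd : HasFDerivAt (fderiv ℝ u) B z := (hfd.differentiableAt (hU.mem_nhds hz)).hasFDerivAt
  have hsymm : ∀ v w : ℂ, B v w = B w v :=
    second_derivative_symmetric_of_eventually hud hBd
  -- derivatives of pdx u and pdy u
  have hx : HasFDerivAt (fun w => pdx u w)
      ((ContinuousLinearMap.apply ℝ ℝ (1:ℂ)).comp B) z := by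
    exact (ContinuousLinearMap.apply ℝ ℝ (1:ℂ)).hasFDerivAt.comp z hBd
  have hy : HasFDerivAt (fun w => pdy u w)
      ((ContinuousLinearMap.apply ℝ ℝ (Complex.I)).comp B) z := by
    exact (ContinuousLinearMap.apply ℝ ℝ (Complex.I)).hasFDerivAt.comp z hBd
  -- Laplace at z
  have hlap' : pdx (pdx u) z + pdy (pdy u) z = 0 := hlap z hz
  have hpxx : pdx (pdx u) z = B 1 1 := by
    have : fderiv ℝ (fun w => pdx u w) z = (ContinuousLinearMap.apply ℝ ℝ (1:ℂ)).comp B :=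
      hx.fderiv
    simp [pdx, this]
  have hpyy : pdy (pdy u) z = B Complex.I Complex.I := by
    have : fderiv ℝ (fun w => pdy u w) z = (ContinuousLinearMap.apply ℝ ℝ (Complex.I)).comp B :=
      hy.fderiv
    simp [pdy, this]
  have hlapB : B 1 1 + B Complex.I Complex.I = 0 := by rw [← hpxx, ← hpyy]; exact hlap'
  -- real derivative of f
  set L : ℂ →L[ℝ] ℂ :=
    (Complex.ofRealCLM.comp ((ContinuousLinearMap.apply ℝ ℝ (1:ℂ)).comp B)) -
      (Complex.I • (Complex.ofRealCLM.comp ((ContinuousLinearMap.apply ℝ ℝ (Complex.I)).comp B)))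
      with hL
  have hf : HasFDerivAt (fun w => (pdx u w : ℂ) - Complex.I * (pdy u w : ℂ)) L z := by
    have h1 : HasFDerivAt (fun w => (pdx u w : ℂ))
        (Complex.ofRealCLM.comp ((ContinuousLinearMap.apply ℝ ℝ (1:ℂ)).comp B)) z :=
      Complex.ofRealCLM.hasFDerivAt.comp z hx
    have h2 : HasFDerivAt (fun w => (pdy u w : ℂ))
        (Complex.ofRealCLM.comp ((ContinuousLinearMap.apply ℝ ℝ (Complex.I)).comp B)) z :=
      Complex.ofRealCLM.hasFDerivAt.comp z hy
    simpa [hL, smul_eq_mul, Pi.sub_def] using h1.sub (h2.const_mul Complex.I)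
  -- L is complex linear: L = smulRight 1 (L 1)
  have hCR : L Complex.I = Complex.I * L 1 := by
    simp only [hL, ContinuousLinearMap.sub_apply, ContinuousLinearMap.comp_apply,
      ContinuousLinearMap.smul_apply, ContinuousLinearMap.apply_apply, Complex.ofRealCLM_apply,
      smul_eq_mul]
    have h1 : B Complex.I 1 = B 1 Complex.I := hsymm _ _
    have h2 : B Complex.I Complex.I = - B 1 1 := by linarith
    rw [h1, h2]
    push_cast
    ring_nf
    rw [Complex.I_sq]
    ring
  have hLeq : L = ((1 : ℂ →L[ℂ] ℂ).smulRight (L 1)).restrictScalars ℝ := by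
    ext w
    have hw : w = (w.re : ℂ) * 1 + (w.im : ℂ) * Complex.I := by
      simp [Complex.re_add_im]
    rw [hw]
    have : ((w.re : ℂ) * 1 + (w.im : ℂ) * Complex.I) = w.re • (1:ℂ) + w.im • Complex.I := by
      simp [Complex.real_smul]
    rw [this, map_add, map_add, map_smul, map_smul, map_smul, map_smul, hCR]
    simp [smul_eq_mul]
  exact (hasFDerivAt_of_restrictScalars ℝ (hLeq ▸ hf) rfl).differentiableAt

lemma exists_primitive {f : ℂ → ℂ} {c : ℂ} {R r : ℝ} (hr : 0 < r) (hrR : r < R)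
    (hd : DifferentiableOn ℂ f (ball c R)) :
    ∃ F : ℂ → ℂ, ∀ z ∈ ball c r, HasDerivAt F (f z) z := by
  set r' : ℝ := (r + R) / 2 with hr'
  have hr'pos : 0 < r' := by rw [hr']; linarith
  have hrr' : r < r' := by simp [hr']; linarith
  have hr'R : r' < R := by simp [hr']; linarith
  lift r' to NNReal using hr'pos.le with r'' hr''
  have hsub : closedBall c (r'' : ℝ) ⊆ ball c R := closedBall_subset_ball hr'R
  have hp : HasFPowerSeriesOnBall f (cauchyPowerSeries f c r'') c r'' :=
    (hd.mono hsub).hasFPowerSeriesOnBall (by exact_mod_cast hr'pos)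
  set p := cauchyPowerSeries f c r'' with hpdef
  have hrad : (r'' : ENNReal) ≤ p.radius := hp.r_le
  lift r to NNReal using hr.le with rr hrr
  have hsum : Summable fun n => ‖p n‖ * (rr : ℝ) ^ n := by
    apply p.summable_norm_mul_pow
    calc (rr : ENNReal) < r'' := by exact_mod_cast hrr'
    _ ≤ p.radius := hrad
  set a : ℕ → ℂ := fun n => p.coeff n with hadef
  set g : ℕ → ℂ → ℂ := fun n z => (a n / (n + 1)) * (z - c) ^ (n + 1) with hgdef
  set g' : ℕ → ℂ → ℂ := fun n z => a n * (z - c) ^ n with hg'def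
  have hderiv : ∀ n z, z ∈ ball c (rr : ℝ) → HasDerivAt (g n) (g' n z) z := by
    intro n z _
    have h1 : HasDerivAt (fun z : ℂ => (z - c) ^ (n + 1)) ((n + 1 : ℕ) * (z - c) ^ n) z := by
      simpa [Function.comp_def] using ((hasDerivAt_pow (n + 1) (z - c)).comp z ((hasDerivAt_id z).sub_const c))
    have := h1.const_mul (a n / (n + 1))
    convert this using 1
    · rfl
    · rfl
    have hne : ((n : ℂ) + 1) ≠ 0 := Nat.cast_add_one_ne_zero n
    simp only [hg'def]
    field_simp
    push_cast
    ring
  have hbound : ∀ n z, z ∈ ball c (rr : ℝ) → ‖g' n z‖ ≤ ‖p n‖ * (rr : ℝ) ^ n := by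
    intro n z hz
    rw [mem_ball, dist_eq_norm] at hz
    calc ‖g' n z‖ = ‖a n‖ * ‖z - c‖ ^ n := by simp [hg'def]
    _ ≤ ‖a n‖ * (rr : ℝ) ^ n :=
        mul_le_mul_of_nonneg_left (pow_le_pow_left₀ (norm_nonneg _) hz.le n) (norm_nonneg _)
    _ = ‖p n‖ * (rr : ℝ) ^ n := by rw [p.norm_apply_eq_norm_coef]
  have hg0 : Summable fun n => g n c := by
    apply summable_zero.congr
    intro n
    simp [hgdef]
  refine ⟨fun z => ∑' n, g n z, fun z hz => ?_⟩
  have hder := hasDerivAt_tsum_of_isPreconnected hsum isOpen_ball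
    (convex_ball c (rr : ℝ)).isPreconnected hderiv hbound
    (mem_ball_self (by exact_mod_cast hr)) hg0 hz
  convert hder using 1
  · rfl
  · rfl
  -- f z = ∑' n, g' n z
  have hzball : z - c ∈ Metric.eball (0 : ℂ) (r'' : ENNReal) := by
    rw [Metric.mem_eball, edist_zero_right]
    rw [mem_ball, dist_eq_norm] at hz
    have h1 : ‖z - c‖₊ < r'' := by
      rw [← NNReal.coe_lt_coe]
      calc (‖z - c‖₊ : ℝ) = ‖z - c‖ := rfl
      _ < (rr : ℝ) := hz
      _ < (r'' : ℝ) := hrr'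
    exact_mod_cast h1
  have hs := hp.hasSum hzball
  simp only [FormalMultilinearSeries.apply_eq_pow_smul_coeff, smul_eq_mul, add_sub_cancel] at hs
  rw [← hs.tsum_eq]
  apply tsum_congr
  intro n
  simp [hg'def, hadef, mul_comm]


lemma norm_sq_sub_real (v : ℂ) (b : ℝ) : ‖v - (b:ℂ)‖ ^ 2 = (v.re - b) ^ 2 + v.im ^ 2 := by
  rw [Complex.sq_norm, Complex.normSq_apply]
  simp [Complex.sub_re, Complex.sub_im, Complex.ofReal_re, Complex.ofReal_im]
  ring

lemma norm_sq_add_real (v : ℂ) (b : ℝ) : ‖v + (b:ℂ)‖ ^ 2 = (v.re + b) ^ 2 + v.im ^ 2 := by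
  rw [Complex.sq_norm, Complex.normSq_apply]
  simp [Complex.add_re, Complex.add_im, Complex.ofReal_re, Complex.ofReal_im]
  ring

lemma norm_real_of_nonneg {b : ℝ} (hb : 0 ≤ b) : ‖((b:ℝ):ℂ)‖ = b := by
  rw [Complex.norm_real]; exact abs_of_nonneg hb

/-- Harnack-type estimate via the Schwarz lemma. -/
lemma harnack_ball {G : ℂ → ℂ} {c : ℂ} {R : ℝ} {a : ℝ} (hR : 0 < R)
    (hd : DifferentiableOn ℂ G (ball c R))
    (hre : ∀ w ∈ ball c R, 0 ≤ (G w).re) (hGc : G c = (a : ℂ)) :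
    ∀ z ∈ ball c R, dist z c ≤ R / 2 → ‖G z‖ ≤ 3 * a ∧ a / 3 ≤ (G z).re := by
  have ha0 : 0 ≤ a := by
    have := hre c (mem_ball_self hR)
    rwa [hGc, Complex.ofReal_re] at this
  intro z hz hz2
  have key : ∀ ε : ℝ, 0 < ε → ‖G z + ε‖ ≤ 3 * (a + ε) ∧ (a + ε) / 3 ≤ (G z).re + ε := by
    intro ε hε
    set b : ℝ := a + ε with hb
    have hbpos : 0 < b := by positivity
    set h : ℂ → ℂ := fun w => (G w + ε - b) / (G w + ε + b) with hh
    have hden : ∀ w ∈ ball c R, G w + ε + b ≠ 0 := by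
      intro w hw hcon
      have h1 : (G w + ε + b).re = 0 := by rw [hcon]; simp
      simp only [Complex.add_re, Complex.ofReal_re] at h1
      have h2 := hre w hw
      linarith
    have hhd : DifferentiableOn ℂ h (ball c R) :=
      DifferentiableOn.div ((hd.add_const _).sub_const _) ((hd.add_const _).add_const _) hden
    have hhc : h c = 0 := by
      simp only [hh, hGc, hb]
      rw [div_eq_zero_iff]
      left; push_cast; ring
    have hmaps : MapsTo h (ball c R) (ball (h c) 1) := by
      rw [hhc]
      intro w hw
      rw [mem_ball, dist_zero_right, hh, norm_div]
      have hvre : ε ≤ (G w + ε).re := by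
        have := hre w hw
        simp only [Complex.add_re, Complex.ofReal_re]; linarith
      set v : ℂ := G w + ε with hv
      have hne : v + (b : ℂ) ≠ 0 := hden w hw
      have hlt : ‖v - b‖ < ‖v + b‖ := by
        have e1 := norm_sq_sub_real v b
        have e2 := norm_sq_add_real v b
        nlinarith [norm_nonneg (v - (b:ℂ)), norm_nonneg (v + (b:ℂ)), hε, hvre, hbpos]
      rw [div_lt_one (lt_of_le_of_lt (norm_nonneg _) hlt)]
      exact hlt
    have hsch := Complex.dist_le_div_mul_dist_of_mapsTo_ball hhd (hmaps.mono_right ball_subset_closedBall) hz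
    rw [hhc, dist_zero_right] at hsch
    have hhz : ‖h z‖ ≤ 1 / 2 := by
      calc ‖h z‖ ≤ 1 / R * dist z c := hsch
      _ ≤ 1 / R * (R / 2) := by
          apply mul_le_mul_of_nonneg_left hz2 (by positivity)
      _ = 1 / 2 := by field_simp
    set v : ℂ := G z + ε with hv
    have hne : v + (b : ℂ) ≠ 0 := hden z hz
    have heq : v - b = h z * (v + b) := by
      rw [hh]
      field_simp
      rw [mul_div_assoc, div_self (hden z hz), mul_one]
    have hnorm : ‖v - b‖ ≤ 1 / 2 * ‖v + b‖ := by
      rw [heq, norm_mul]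
      exact mul_le_mul_of_nonneg_right hhz (norm_nonneg _)
    have hnb : ‖((b:ℝ):ℂ)‖ = b := norm_real_of_nonneg hbpos.le
    have htri1 : ‖v‖ - b ≤ ‖v - b‖ := by
      have := norm_sub_norm_le v ((b : ℂ))
      rwa [hnb] at this
    have htri2 : ‖v + b‖ ≤ ‖v‖ + b := by
      have := norm_add_le v ((b : ℂ))
      rwa [hnb] at this
    constructor
    · -- ‖G z + ε‖ ≤ 3 b
      have : ‖v‖ - b ≤ 1 / 2 * (‖v‖ + b) := le_trans htri1 (hnorm.trans (by linarith))
      linarith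
    · -- re lower bound
      have hvre : 0 ≤ v.re := by
        have := hre z hz
        simp only [hv, Complex.add_re, Complex.ofReal_re]; linarith
      have hsq : ‖v - b‖ ^ 2 ≤ 1 / 4 * ‖v + b‖ ^ 2 := by
        have h1 : 0 ≤ ‖v - b‖ := norm_nonneg _
        nlinarith [norm_nonneg (v + (b:ℂ))]
      have e1 := norm_sq_sub_real v b
      have e2 := norm_sq_add_real v b
      rw [e1, e2] at hsq
      have : b / 3 ≤ v.re := by nlinarith [sq_nonneg v.im, sq_nonneg (3 * v.re - b)]
      simp only [hv, Complex.add_re, Complex.ofReal_re] at this ⊢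
      linarith
  constructor
  · apply le_of_forall_pos_le_add
    intro ε hε
    have h1 := (key (ε / 4) (by linarith)).1
    have h2 : ‖G z‖ ≤ ‖G z + ((ε/4 : ℝ) : ℂ)‖ + ε / 4 := by
      have hrw : G z = (G z + ((ε/4 : ℝ) : ℂ)) - ((ε/4 : ℝ) : ℂ) := by ring
      calc ‖G z‖ = ‖(G z + ((ε/4 : ℝ) : ℂ)) - ((ε/4 : ℝ) : ℂ)‖ := by rw [← hrw]
      _ ≤ ‖G z + ((ε/4 : ℝ) : ℂ)‖ + ‖((ε/4 : ℝ) : ℂ)‖ := norm_sub_le _ _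
      _ = ‖G z + ((ε/4 : ℝ) : ℂ)‖ + ε / 4 := by rw [norm_real_of_nonneg (by linarith)]
    linarith
  · have : ∀ ε : ℝ, 0 < ε → a / 3 ≤ (G z).re + ε := by
      intro ε hε
      have := (key ε hε).2
      linarith
    by_contra hcon
    push_neg at hcon
    have := this ((a / 3 - (G z).re) / 2) (by linarith)
    linarith

lemma deriv_bound_of_norm_le {G : ℂ → ℂ} {c : ℂ} {R M : ℝ} (hR : 0 < R)
    (hd : DifferentiableOn ℂ G (ball c R)) (hM : ∀ w ∈ ball c R, ‖G w‖ ≤ M)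
    {z : ℂ} (hz : dist z c ≤ R / 2) : ‖deriv G z‖ ≤ 4 * M / R := by
  have hzball : z ∈ ball c R := by rw [mem_ball]; linarith [hz]
  have hM0 : 0 ≤ M := le_trans (norm_nonneg _) (hM z hzball)
  have hsub : ball z (R / 2) ⊆ ball c R := by
    intro w hw
    rw [mem_ball] at hw ⊢
    calc dist w c ≤ dist w z + dist z c := dist_triangle _ _ _
    _ < R / 2 + R / 2 := by linarith
    _ = R := by ring
  have hd' : DifferentiableOn ℂ G (ball z (R / 2)) := hd.mono hsub
  apply le_of_forall_pos_le_add
  intro ε hε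
  set δ : ℝ := ε * R / 2 with hδ
  have hδpos : 0 < δ := by positivity
  have hmaps : Set.MapsTo G (ball z (R / 2)) (ball (G z) (2 * M + δ)) := by
    intro w hw
    rw [mem_ball, dist_eq_norm]
    calc ‖G w - G z‖ ≤ ‖G w‖ + ‖G z‖ := norm_sub_le _ _
    _ ≤ M + M := add_le_add (hM w (hsub hw)) (hM z hzball)
    _ < 2 * M + δ := by linarith
  have := Complex.norm_deriv_le_div_of_mapsTo_ball hd' (hmaps.mono_right ball_subset_closedBall) (by linarith)
  calc ‖deriv G z‖ ≤ (2 * M + δ) / (R / 2) := this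
  _ = 4 * M / R + ε := by field_simp; ring

lemma real_clm_eq_zero {L : ℂ →L[ℝ] ℝ} (h1 : L 1 = 0) (hI : L Complex.I = 0) : L = 0 := by
  ext w
  have hw : (w:ℂ) = w.re • (1:ℂ) + w.im • Complex.I := by
    simp [Complex.real_smul, Complex.re_add_im]
  rw [hw, map_add, map_smul, map_smul, h1, hI]
  simp

lemma local_est {u : ℂ → ℝ} {U : Set ℂ} (hU : IsOpen U) (hu : IsHarmonicOn u U)
    (hneg : ∀ w ∈ U, u w ≤ 0) {c : ℂ} {R : ℝ} (hR : 0 < R) (hsub : closedBall c R ⊆ U) :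
    ∀ z, dist z c ≤ R / 8 →
      |u z| ≤ 3 * |u c| ∧ Real.sqrt ((pdx u z) ^ 2 + (pdy u z) ^ 2) ≤ 48 * |u c| / R := by
  have hball : ball c R ⊆ U := (ball_subset_closedBall).trans hsub
  set f : ℂ → ℂ := fun w => (pdx u w : ℂ) - Complex.I * (pdy u w : ℂ) with hf
  have hfd : DifferentiableOn ℂ f (ball c R) := fun w hw =>
    (harmonic_grad_hasDeriv hU hu (hball hw)).differentiableWithinAt
  obtain ⟨F, hF⟩ := exists_primitive (by linarith : (0:ℝ) < R / 2) (by linarith : R / 2 < R) hfd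
  set s : Set ℂ := ball c (R / 2) with hs
  have hsU : s ⊆ U := fun w hw => hball (ball_subset_ball (by linarith) hw)
  have hcs : c ∈ s := mem_ball_self (by linarith)
  -- F is ℝ-differentiable with explicit derivative
  have hFA : ∀ z ∈ s, HasFDerivAt F
      (((1 : ℂ →L[ℂ] ℂ).smulRight (f z)).restrictScalars ℝ) z := by
    intro z hz
    exact ((hasDerivAt_iff_hasFDerivAt.1 (hF z hz)).restrictScalars ℝ)
  -- φ = Re F - u is constant on s
  set φ : ℂ → ℝ := fun w => (F w).re - u w with hφ
  have hud : ∀ z ∈ s, HasFDerivAt u (fderiv ℝ u z) z := fun z hz =>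
    (((hu.1.differentiableOn (by norm_num)).differentiableAt
      (hU.mem_nhds (hsU hz)))).hasFDerivAt
  have hφzero : ∀ z ∈ s, HasFDerivAt φ (0 : ℂ →L[ℝ] ℝ) z := by
    intro z hz
    have h1 : HasFDerivAt (fun w => (F w).re)
        (Complex.reCLM.comp (((1 : ℂ →L[ℂ] ℂ).smulRight (f z)).restrictScalars ℝ)) z :=
      Complex.reCLM.hasFDerivAt.comp z (hFA z hz)
    have h2 := (h1.sub (hud z hz))
    have hzero : Complex.reCLM.comp (((1 : ℂ →L[ℂ] ℂ).smulRight (f z)).restrictScalars ℝ)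
        - fderiv ℝ u z = 0 := by
      apply real_clm_eq_zero
      · simp [hf, pdx, Complex.sub_re, Complex.mul_re]
      · simp [hf, pdy, Complex.sub_re, Complex.mul_re, Complex.mul_im]
    rwa [hzero] at h2
  have hconst : ∀ z ∈ s, φ z = φ c := by
    intro z hz
    apply (convex_ball c (R/2)).is_const_of_fderivWithin_eq_zero
      (fun w hw => ((hφzero w hw).differentiableAt.differentiableWithinAt)) _ hz hcs
    intro w hw
    rw [fderivWithin_of_isOpen isOpen_ball hw]
    exact (hφzero w hw).fderiv
  -- the function G
  set a : ℝ := -u c with ha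
  have ha' : a = |u c| := by
    rw [ha, abs_of_nonpos (hneg c (hsU hcs))]
  set G : ℂ → ℂ := fun w => F c - F w + ((a : ℝ) : ℂ) with hG
  have hGre : ∀ w ∈ s, (G w).re = -u w := by
    intro w hw
    have h1 := hconst w hw
    simp only [hφ] at h1
    simp only [hG, Complex.add_re, Complex.sub_re, Complex.ofReal_re]
    linarith
  have hGc : G c = ((a : ℝ) : ℂ) := by simp [hG]
  have hGd : DifferentiableOn ℂ G s := by
    apply DifferentiableOn.add_const
    apply DifferentiableOn.const_sub
    exact fun w hw => (hF w hw).differentiableAt.differentiableWithinAt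
  have hre : ∀ w ∈ s, 0 ≤ (G w).re := by
    intro w hw
    rw [hGre w hw]
    linarith [hneg w (hsU hw)]
  have hHar := harnack_ball (by linarith : (0:ℝ) < R / 2) hGd hre hGc
  -- bound ‖G‖ on ball c (R/4)
  have hGbound : ∀ w ∈ ball c (R / 4), ‖G w‖ ≤ 3 * a := by
    intro w hw
    rw [mem_ball] at hw
    exact (hHar w (by rw [mem_ball]; linarith) (by linarith)).1
  intro z hzd
  have hz4 : z ∈ ball c (R / 4) := by rw [mem_ball]; linarith
  have hzs : z ∈ s := by rw [mem_ball]; linarith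
  constructor
  · have h1 := (hHar z hzs (by linarith)).1
    have h2 : |u z| ≤ ‖G z‖ := by
      rw [abs_of_nonpos (hneg z (hsU hzs))]
      calc -u z = (G z).re := (hGre z hzs).symm
      _ ≤ |(G z).re| := le_abs_self _
      _ ≤ ‖G z‖ := Complex.abs_re_le_norm _
    rw [← ha']
    linarith
  · -- gradient bound
    have hder : HasDerivAt G (-(f z)) z := by
      have h1 := hF z hzs
      have h2 : HasDerivAt (fun w => F c - F w) (-(f z)) z := (h1.const_sub (F c))
      simpa [hG] using h2.add_const ((a : ℝ) : ℂ)
    have hDB := deriv_bound_of_norm_le (by linarith : (0:ℝ) < R / 4)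
      (hGd.mono (ball_subset_ball (by linarith))) hGbound (z := z) (by linarith)
    rw [hder.deriv] at hDB
    have hnf : ‖-(f z)‖ = Real.sqrt ((pdx u z) ^ 2 + (pdy u z) ^ 2) := by
      rw [norm_neg, hf, Complex.norm_def, Complex.normSq_apply]
      congr 1
      simp [Complex.sub_re, Complex.sub_im, Complex.mul_re, Complex.mul_im]
      ring
    rw [hnf] at hDB
    calc Real.sqrt ((pdx u z) ^ 2 + (pdy u z) ^ 2) ≤ 4 * (3 * a) / (R / 4) := hDB
    _ = 48 * a / R := by field_simp; ring
    _ = 48 * |u c| / R := by rw [ha']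

lemma sSup_tendsto_zero {K : Set ℂ} (g : ℕ → ℂ → ℝ) (hg : ∀ k, ∀ z ∈ K, 0 ≤ g k z)
    (hunif : ∀ ε : ℝ, 0 < ε → ∀ᶠ k in atTop, ∀ z ∈ K, g k z ≤ ε) :
    Tendsto (fun k => sSup ((fun z => g k z) '' K)) atTop (nhds 0) := by
  rcases K.eq_empty_or_nonempty with hK | ⟨w, hw⟩
  · simp only [hK, Set.image_empty, Real.sSup_empty]
    exact tendsto_const_nhds
  · rw [Metric.tendsto_atTop]
    intro ε hε
    have := hunif (ε / 2) (by linarith)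
    rw [Filter.eventually_atTop] at this
    obtain ⟨N, hN⟩ := this
    refine ⟨N, fun k hk => ?_⟩
    have hub : ∀ x ∈ (fun z => g k z) '' K, x ≤ ε / 2 := by
      rintro x ⟨z, hz, rfl⟩
      exact hN k hk z hz
    have h1 : sSup ((fun z => g k z) '' K) ≤ ε / 2 := Real.sSup_le hub (by linarith)
    have h2 : 0 ≤ sSup ((fun z => g k z) '' K) := by
      have hmem : g k w ∈ (fun z => g k z) '' K := ⟨w, hw, rfl⟩
      exact le_trans (hg k w hw) (le_csSup ⟨ε / 2, hub⟩ hmem)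
    rw [Real.dist_eq, sub_zero, _root_.abs_of_nonneg h2]
    linarith

/-- Harnack-type convergence: a sequence of nonpositive harmonic functions on a connected open
set whose values at one point tend to `0` tends to `0` uniformly on compact sets, together
with its gradients. -/
theorem nonpositive_harmonic_tendsto_zero_locally_uniformly_with_gradient
    (U : Set ℂ) (hU : IsOpen U) (hconn : IsConnected U) (z₀ : ℂ) (hz₀ : z₀ ∈ U)
    (u : ℕ → ℂ → ℝ) (hharm : ∀ k, IsHarmonicOn (u k) U)
    (hnonpos : ∀ k, ∀ z ∈ U, u k z ≤ 0)
    (hlim : Tendsto (fun k => u k z₀) atTop (nhds 0)) :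
    ∀ K : Set ℂ, K ⊆ U → IsCompact K →
      Tendsto (fun k => sSup ((fun z => |u k z|) '' K)) atTop (nhds 0) ∧
      Tendsto (fun k => sSup ((fun z => Real.sqrt ((pdx (u k) z) ^ 2 + (pdy (u k) z) ^ 2)) '' K))
        atTop (nhds 0) := by
  -- radius choice
  have hrad : ∀ c ∈ U, ∃ R : ℝ, 0 < R ∧ closedBall c R ⊆ U := by
    intro c hc
    obtain ⟨ε, hε, hball⟩ := Metric.isOpen_iff.1 hU c hc
    exact ⟨ε / 2, by linarith, (closedBall_subset_ball (by linarith)).trans hball⟩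
  -- transfer of convergence
  have htrans : ∀ c ∈ U, ∀ R : ℝ, 0 < R → closedBall c R ⊆ U → ∀ z, dist z c ≤ R / 8 →
      Tendsto (fun k => u k c) atTop (nhds 0) → Tendsto (fun k => u k z) atTop (nhds 0) := by
    intro c hc R hR hsub z hz hc0
    have hgl : Tendsto (fun k => 3 * |u k c|) atTop (nhds 0) := by
      have h1 : Tendsto (fun k => |u k c|) atTop (nhds 0) := by simpa using hc0.abs
      simpa using h1.const_mul 3
    refine squeeze_zero_norm (fun k => ?_) hgl
    exact ((local_est hU (hharm k) (hnonpos k) hR hsub z hz).1)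
  -- the set where convergence holds is all of U
  set V₁ : Set ℂ := {z | z ∈ U ∧ Tendsto (fun k => u k z) atTop (nhds 0)} with hV₁def
  set V₂ : Set ℂ := {z | z ∈ U ∧ ¬ Tendsto (fun k => u k z) atTop (nhds 0)} with hV₂def
  have hV₁open : IsOpen V₁ := by
    rw [Metric.isOpen_iff]
    rintro c ⟨hcU, hc0⟩
    obtain ⟨R, hR, hsub⟩ := hrad c hcU
    refine ⟨R / 8, by linarith, fun z hz => ?_⟩
    rw [mem_ball] at hz
    exact ⟨hsub (mem_closedBall.2 (by linarith)),
      htrans c hcU R hR hsub z (le_of_lt hz) hc0⟩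
  have hV₂open : IsOpen V₂ := by
    rw [Metric.isOpen_iff]
    rintro c ⟨hcU, hc0⟩
    obtain ⟨R, hR, hsub⟩ := hrad c hcU
    refine ⟨R / 16, by linarith, fun z hz => ?_⟩
    rw [mem_ball] at hz
    have hzU : z ∈ U := hsub (mem_closedBall.2 (by linarith))
    refine ⟨hzU, fun hz0 => hc0 ?_⟩
    have hsub' : closedBall z (R / 2) ⊆ U := by
      refine subset_trans ?_ hsub
      intro w hw
      rw [mem_closedBall] at hw ⊢
      calc dist w c ≤ dist w z + dist z c := dist_triangle _ _ _
      _ ≤ R / 2 + R / 16 := by linarith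
      _ ≤ R := by linarith
    exact htrans z hzU (R / 2) (by linarith) hsub' c (by
      rw [dist_comm]; linarith) hz0
  have hdisj : Disjoint V₁ V₂ := by
    rw [Set.disjoint_iff]
    rintro z ⟨⟨_, h1⟩, ⟨_, h2⟩⟩
    exact absurd h1 h2
  have hcover : U ⊆ V₁ ∪ V₂ := by
    intro z hz
    by_cases h : Tendsto (fun k => u k z) atTop (nhds 0)
    · exact Or.inl ⟨hz, h⟩
    · exact Or.inr ⟨hz, h⟩
  have hUV₁ : U ⊆ V₁ :=
    hconn.isPreconnected.subset_left_of_subset_union hV₁open hV₂open hdisj hcover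
      ⟨z₀, hz₀, hz₀, hlim⟩
  -- main part
  intro K hKU hK
  -- choose radii over K
  have hchoice : ∀ c : K, ∃ R : ℝ, 0 < R ∧ closedBall (c : ℂ) R ⊆ U := fun c =>
    hrad c (hKU c.2)
  choose r hr hrsub using hchoice
  have hcov : K ⊆ ⋃ c : K, ball (c : ℂ) (r c / 8) := by
    intro z hz
    exact Set.mem_iUnion.2 ⟨⟨z, hz⟩, mem_ball_self (by linarith [hr ⟨z, hz⟩])⟩
  obtain ⟨t, ht⟩ := hK.elim_finite_subcover (fun c : K => ball (c : ℂ) (r c / 8))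
    (fun c => isOpen_ball) hcov
  -- uniform smallness
  have hunif : ∀ ε : ℝ, 0 < ε → ∀ᶠ k in atTop, ∀ z ∈ K,
      |u k z| ≤ ε ∧ Real.sqrt ((pdx (u k) z) ^ 2 + (pdy (u k) z) ^ 2) ≤ ε := by
    intro ε hε
    have hev : ∀ᶠ k in atTop, ∀ i ∈ t, |u k (i : ℂ)| ≤ min (ε / 3) (ε * r i / 48) := by
      rw [Filter.eventually_all_finset]
      intro i _
      have hi0 : Tendsto (fun k => u k (i : ℂ)) atTop (nhds 0) := (hUV₁ (hKU i.2)).2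
      have habs : Tendsto (fun k => |u k (i : ℂ)|) atTop (nhds 0) := by simpa using hi0.abs
      have hmin : 0 < min (ε / 3) (ε * r i / 48) := by
        apply lt_min (by linarith)
        have := hr i
        positivity
      have := habs.eventually (eventually_le_nhds hmin)
      simpa using this
    filter_upwards [hev] with k hk z hz
    obtain ⟨i, hit, hzi⟩ : ∃ i ∈ t, z ∈ ball (i : ℂ) (r i / 8) := by
      have := ht hz
      simpa using this
    rw [mem_ball] at hzi
    have hloc := local_est hU (hharm k) (hnonpos k) (hr i) (hrsub i) z (le_of_lt hzi)
    have hik := hk i hit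
    constructor
    · calc |u k z| ≤ 3 * |u k (i : ℂ)| := hloc.1
      _ ≤ 3 * (ε / 3) := by
          have := le_trans hik (min_le_left _ _)
          linarith
      _ = ε := by ring
    · calc Real.sqrt ((pdx (u k) z) ^ 2 + (pdy (u k) z) ^ 2)
          ≤ 48 * |u k (i : ℂ)| / r i := hloc.2
      _ ≤ 48 * (ε * r i / 48) / r i := by
          have h1 := le_trans hik (min_le_right _ _)
          have h2 := hr i
          gcongr
      _ = ε := by
          have := (hr i).ne'
          field_simp
    -- end
  constructor
  · apply sSup_tendsto_zero
    · intro k z _; exact abs_nonneg _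
    · intro ε hε
      filter_upwards [hunif ε hε] with k hk z hz
      exact (hk z hz).1
  · apply sSup_tendsto_zero
    · intro k z _; exact Real.sqrt_nonneg _
    · intro ε hε
      filter_upwards [hunif ε hε] with k hk z hz
      exact (hk z hz).2
end
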